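/- arXiv:1112.3977 — 5 statements merged into one kernel-verified Lean document; each statement's English description precedes it below -/
import Mathlib

section
/- Let n ≥ 3 be an integer, m > 0, and k ∈ (0, (m+n+2)/2]. Let u: ℝⁿ → (0,∞) be a smooth nonconstant function satisfying Hess u(x) = (Δu(x)/n)·Id for all x ∈ ℝⁿ, and suppose there exist constants λ > 0 and μ > 0 such that (m+n)λ − 2(m+n−k)μ·u(x)^k = −((m+n)(m+n−2)/4)·(|∇u(x)|² − (2/n)u(x)Δu(x)) − (m(m+n−2)/(2n))·u(x)Δu(x) for all x ∈ ℝⁿ. Then k = 1, Δu is a positive constant, |∇u|² − (2/n)uΔu is a negative constant, and there exist α > 0, b ∈ ℝⁿ, γ ∈ ℝ with 4αγ > |b|² such that u(x) = α|x|² + ⟨b, x⟩ + γ for all x. -/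
open MeasureTheory
open scoped RealInnerProductSpace

noncomputable section

/-- The Euclidean Laplacian `Δf = Σᵢ ∂²f/∂xᵢ²`. -/
def lapl {n : ℕ} (f : EuclideanSpace ℝ (Fin n) → ℝ) (x : EuclideanSpace ℝ (Fin n)) : ℝ :=
  ∑ i, iteratedFDeriv ℝ 2 f x ![EuclideanSpace.single i 1, EuclideanSpace.single i 1]

/-- The `(i,j)` entry of the Euclidean Hessian matrix of `f` at `x`. -/
def hess {n : ℕ} (f : EuclideanSpace ℝ (Fin n) → ℝ) (x : EuclideanSpace ℝ (Fin n))
    (i j : Fin n) : ℝ :=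
  iteratedFDeriv ℝ 2 f x ![EuclideanSpace.single i 1, EuclideanSpace.single j 1]

lemma euclid_clm_ext {n : ℕ} {F : Type*} [NormedAddCommGroup F] [NormedSpace ℝ F]
    {A B : EuclideanSpace ℝ (Fin n) →L[ℝ] F}
    (h : ∀ i, A (EuclideanSpace.single i 1) = B (EuclideanSpace.single i 1)) : A = B := by
  apply ContinuousLinearMap.coe_injective
  apply Module.Basis.ext (EuclideanSpace.basisFun (Fin n) ℝ).toBasis
  intro i
  simpa using h i

set_option maxHeartbeats 2000000 in
lemma quad_of_hess {n : ℕ} (hn : 2 ≤ n) (u : EuclideanSpace ℝ (Fin n) → ℝ)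
    (hsmooth : ContDiff ℝ (⊤ : ℕ∞) u)
    (hhess : ∀ x i j, hess u x i j = (lapl u x / n) * (if i = j then 1 else 0)) :
    ∃ c : ℝ, (∀ x, lapl u x = n * c) ∧ (∀ x, gradient u x = c • x + gradient u 0) ∧
      (∀ x, u x = (c/2) * ‖x‖^2 + ⟪gradient u 0, x⟫ + u 0) := by
  have hne : (n : ℝ) ≠ 0 := by
    have : (0:ℕ) < n := by omega
    exact_mod_cast this.ne'
  set e : Fin n → EuclideanSpace ℝ (Fin n) := fun i => EuclideanSpace.single i 1 with he
  set v := fderiv ℝ u with hv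
  have hud : Differentiable ℝ u := hsmooth.differentiable (by simp)
  have hvsm : ContDiff ℝ (⊤ : ℕ∞) v := hsmooth.fderiv_right (by simp)
  have hvd : Differentiable ℝ v := hvsm.differentiable (by simp)
  set φ : EuclideanSpace ℝ (Fin n) → ℝ := fun x => lapl u x / n with hφ
  -- second-derivative entries
  have hd2 : ∀ x (i j : Fin n), fderiv ℝ v x (e i) (e j) = if i = j then φ x else 0 := by
    intro x i j
    have h := hhess x i j
    rw [hess, iteratedFDeriv_two_apply] at h
    simp only [Matrix.cons_val_zero, Matrix.cons_val_one, Matrix.head_cons] at h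
    rw [show (fderiv ℝ (fderiv ℝ u) x) = fderiv ℝ v x from rfl] at h
    rw [h]
    split <;> simp [hφ]
  -- smoothness of φ
  have hφψ : φ = fun x => fderiv ℝ v x (e ⟨0, by omega⟩) (e ⟨0, by omega⟩) := by
    funext x
    rw [hd2 x ⟨0, by omega⟩ ⟨0, by omega⟩]
    simp
  have hφd : Differentiable ℝ φ := by
    rw [hφψ]
    have h : ContDiff ℝ (⊤ : ℕ∞) (fderiv ℝ v) := hvsm.fderiv_right (by simp)
    exact ((h.clm_apply contDiff_const).clm_apply contDiff_const).differentiable (by simp)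
  -- the partial-gradient functions and their derivatives
  have hG : ∀ (l : Fin n) (y : EuclideanSpace ℝ (Fin n)),
      HasFDerivAt (fun z => v z (e l)) (φ y • (EuclideanSpace.proj l :
        EuclideanSpace ℝ (Fin n) →L[ℝ] ℝ)) y := by
    intro l y
    have h1 : HasFDerivAt (fun z => (ContinuousLinearMap.apply ℝ ℝ (e l)) (v z))
        ((ContinuousLinearMap.apply ℝ ℝ (e l)).comp (fderiv ℝ v y)) y :=
      (ContinuousLinearMap.apply ℝ ℝ (e l)).hasFDerivAt.comp y (hvd y).hasFDerivAt
    have h2 : (ContinuousLinearMap.apply ℝ ℝ (e l)).comp (fderiv ℝ v y)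
        = φ y • (EuclideanSpace.proj l : EuclideanSpace ℝ (Fin n) →L[ℝ] ℝ) := by
      apply euclid_clm_ext
      intro i
      simp only [ContinuousLinearMap.coe_comp', Function.comp_apply,
        ContinuousLinearMap.apply_apply, ContinuousLinearMap.smul_apply]
      rw [hd2 y i l]
      have hpe : (EuclideanSpace.proj l) (EuclideanSpace.single i (1:ℝ)) = if i = l then 1 else 0 := by
        show (EuclideanSpace.single i (1:ℝ)) l = _
        simp [EuclideanSpace.single_apply, eq_comm]
      rw [hpe]
      split <;> simp
    rw [h2] at h1
    exact h1
  -- φ has zero derivative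
  have hφz : ∀ x, fderiv ℝ φ x = 0 := by
    intro x
    apply euclid_clm_ext
    intro i
    simp only [ContinuousLinearMap.zero_apply]
    -- pick l ≠ i
    obtain ⟨l, hl⟩ : ∃ l : Fin n, l ≠ i := by
      have : Nontrivial (Fin n) := Fin.nontrivial_iff_two_le.mpr hn
      exact exists_ne i
    have hsym := second_derivative_symmetric (f := fun z => v z (e l))
      (f' := fun y => φ y • (EuclideanSpace.proj l : EuclideanSpace ℝ (Fin n) →L[ℝ] ℝ))
      (f'' := (fderiv ℝ φ x).smulRight (EuclideanSpace.proj l))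
      (hG l) ((hφd x).hasFDerivAt.smul_const (EuclideanSpace.proj l : EuclideanSpace ℝ (Fin n) →L[ℝ] ℝ)) (e i) (e l)
    have hpii : e l l = (1:ℝ) := by
      simp [he]
    have hpil : e i l = (0:ℝ) := by
      simp [he, EuclideanSpace.single_apply]
      exact hl
    simp only [ContinuousLinearMap.smulRight_apply, ContinuousLinearMap.smul_apply, smul_eq_mul] at hsym
    rw [show (EuclideanSpace.proj l) (e l) = (1:ℝ) from hpii,
        show (EuclideanSpace.proj l) (e i) = (0:ℝ) from hpil] at hsym
    simpa [he] using hsym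
  have hφc : ∀ x, φ x = φ 0 := fun x => is_const_of_fderiv_eq_zero hφd hφz x 0
  set c := φ 0 with hc
  refine ⟨c, ?_, ?_⟩
  · intro x
    have := hφc x
    rw [hφ] at this
    field_simp at this
    linarith [this]
  -- first derivative components
  have hvl : ∀ (y : EuclideanSpace ℝ (Fin n)) (l : Fin n), v y (e l) = c * y l + v 0 (e l) := by
    intro y l
    have hgy : ∀ z, HasFDerivAt (fun w => v w (e l) - c * (EuclideanSpace.proj l) w)
        (0 : EuclideanSpace ℝ (Fin n) →L[ℝ] ℝ) z := by
      intro z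
      have h1 := hG l z
      rw [hφc z] at h1
      have h2' : HasFDerivAt (fun w : EuclideanSpace ℝ (Fin n) => (EuclideanSpace.proj l) w)
          (EuclideanSpace.proj l : EuclideanSpace ℝ (Fin n) →L[ℝ] ℝ) z :=
        (EuclideanSpace.proj l : EuclideanSpace ℝ (Fin n) →L[ℝ] ℝ).hasFDerivAt
      have h2 : HasFDerivAt (fun w : EuclideanSpace ℝ (Fin n) => c * (EuclideanSpace.proj l) w)
          (c • (EuclideanSpace.proj l : EuclideanSpace ℝ (Fin n) →L[ℝ] ℝ)) z :=
        h2'.const_mul c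
      have := h1.sub h2
      rw [sub_self] at this
      exact this
    have hconst := is_const_of_fderiv_eq_zero (fun z => (hgy z).differentiableAt)
      (fun z => (hgy z).fderiv) y 0
    have h0 : ((0 : EuclideanSpace ℝ (Fin n)) : Fin n → ℝ) l = 0 := rfl
    simp only [EuclideanSpace.proj] at hconst
    have : v y (e l) - c * y l = v 0 (e l) - c * 0 := by
      simpa using hconst
    linarith [this]
  -- gradient at 0 pairing
  have hbv : ∀ w, ⟪gradient u 0, w⟫ = v 0 w := by
    intro w
    have h1 : (InnerProductSpace.toDual ℝ (EuclideanSpace ℝ (Fin n))) (gradient u 0) w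
        = ⟪gradient u 0, w⟫ := InnerProductSpace.toDual_apply_apply
    rw [← h1, gradient, LinearIsometryEquiv.apply_symm_apply]
  have hxv : ∀ x w, ⟪gradient u x, w⟫ = v x w := by
    intro x w
    have h1 : (InnerProductSpace.toDual ℝ (EuclideanSpace ℝ (Fin n))) (gradient u x) w
        = ⟪gradient u x, w⟫ := InnerProductSpace.toDual_apply_apply
    rw [← h1, gradient, LinearIsometryEquiv.apply_symm_apply]
  have hinner_single : ∀ (z : EuclideanSpace ℝ (Fin n)) (l : Fin n), ⟪z, e l⟫ = z l := by
    intro z l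
    simp [he, EuclideanSpace.inner_single_right]
  have hgrad : ∀ x, gradient u x = c • x + gradient u 0 := by
    intro x
    ext l
    have h1 : (gradient u x) l = v x (e l) := by rw [← hinner_single (gradient u x) l]; exact hxv x (e l)
    have h2 : (gradient u 0) l = v 0 (e l) := by rw [← hinner_single (gradient u 0) l]; exact hbv (e l)
    rw [h1, hvl x l, ← h2]
    simp
  refine ⟨hgrad, ?_⟩
  -- integrate once more
  set b := gradient u 0 with hbdef
  have hq : ∀ y, HasFDerivAt (fun t : EuclideanSpace ℝ (Fin n) => (c/2) * ⟪t, t⟫ + ⟪b, t⟫)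
      ((c/2) • ((fderivInnerCLM ℝ ((y : EuclideanSpace ℝ (Fin n)), y)).comp
          ((ContinuousLinearMap.id ℝ _).prod (ContinuousLinearMap.id ℝ _)))
        + (fderivInnerCLM ℝ ((b : EuclideanSpace ℝ (Fin n)), y)).comp
          ((0 : EuclideanSpace ℝ (Fin n) →L[ℝ] EuclideanSpace ℝ (Fin n)).prod
            (ContinuousLinearMap.id ℝ _))) y := by
    intro y
    have h1 := ((hasFDerivAt_id y).inner ℝ (hasFDerivAt_id y)).const_mul (c/2)
    have h2 := (hasFDerivAt_const b y).inner ℝ (hasFDerivAt_id y)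
    exact h1.add h2
  have hzero : ∀ y, HasFDerivAt
      (fun t : EuclideanSpace ℝ (Fin n) => u t - ((c/2) * ⟪t, t⟫ + ⟪b, t⟫))
      (0 : EuclideanSpace ℝ (Fin n) →L[ℝ] ℝ) y := by
    intro y
    have h1 := ((hud y).hasFDerivAt).sub (hq y)
    have h2 : v y - ((c/2) • ((fderivInnerCLM ℝ ((y : EuclideanSpace ℝ (Fin n)), y)).comp
          ((ContinuousLinearMap.id ℝ _).prod (ContinuousLinearMap.id ℝ _)))
        + (fderivInnerCLM ℝ ((b : EuclideanSpace ℝ (Fin n)), y)).comp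
          ((0 : EuclideanSpace ℝ (Fin n) →L[ℝ] EuclideanSpace ℝ (Fin n)).prod
            (ContinuousLinearMap.id ℝ _))) = 0 := by
      apply euclid_clm_ext
      intro i
      simp only [ContinuousLinearMap.sub_apply, ContinuousLinearMap.add_apply,
        ContinuousLinearMap.smul_apply, ContinuousLinearMap.coe_comp', Function.comp_apply,
        ContinuousLinearMap.prod_apply, ContinuousLinearMap.coe_id', id_eq,
        ContinuousLinearMap.zero_apply, fderivInnerCLM_apply, smul_eq_mul]
      have hyl : ⟪y, (EuclideanSpace.single i 1 : EuclideanSpace ℝ (Fin n))⟫ = y i :=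
        hinner_single y i
      have hly : ⟪(EuclideanSpace.single i 1 : EuclideanSpace ℝ (Fin n)), y⟫ = y i := by
        rw [real_inner_comm]; exact hinner_single y i
      have hbl : ⟪b, (EuclideanSpace.single i 1 : EuclideanSpace ℝ (Fin n))⟫ = v 0 (e i) :=
        hbv (e i)
      have h0y : ⟪(0 : EuclideanSpace ℝ (Fin n)), y⟫ = 0 := by simp
      rw [hyl, hly, hbl, h0y]
      have := hvl y i
      simp only [he] at this ⊢
      rw [this]
      ring
    rw [h2] at h1
    exact h1
  have hconst := fun y => is_const_of_fderiv_eq_zero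
    (fun z => (hzero z).differentiableAt) (fun z => (hzero z).fderiv) y 0
  intro x
  have hx := hconst x
  have h0 : ⟪(0:EuclideanSpace ℝ (Fin n)), (0:EuclideanSpace ℝ (Fin n))⟫ = (0:ℝ) := by simp
  have hb0 : ⟪b, (0:EuclideanSpace ℝ (Fin n))⟫ = (0:ℝ) := by simp
  rw [h0, hb0] at hx
  have : u x - ((c/2) * ⟪x, x⟫ + ⟪b, x⟫) = u 0 := by simpa using hx
  rw [real_inner_self_eq_norm_sq] at this
  linarith [this]

set_option maxHeartbeats 2000000 in
/-- rigidity for minimizers which are critical for variations in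
the metric (`Hess u = (Δu/n)·Id`): necessarily `k = 1`, `Δu` is a positive
constant, `|∇u|² - (2/n)uΔu` is a negative constant, and `u` is a
positive-definite quadratic polynomial. -/
theorem gns_metric_critical_rigidity (n : ℕ) (hn : 3 ≤ n) (m k : ℝ) (hm : 0 < m)
    (hk : 0 < k) (hk' : k ≤ (m + n + 2) / 2)
    (u : EuclideanSpace ℝ (Fin n) → ℝ)
    (hsmooth : ContDiff ℝ (⊤ : ℕ∞) u) (hpos : ∀ x, 0 < u x)
    (hnonconst : ¬ ∃ c : ℝ, ∀ x, u x = c)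
    (hhess : ∀ x i j, hess u x i j = (lapl u x / n) * (if i = j then 1 else 0))
    (lam mu : ℝ) (hlam : 0 < lam) (hmu : 0 < mu)
    (hEL : ∀ x, (m + n) * lam - 2 * (m + n - k) * mu * u x ^ k
      = -((m + n) * (m + n - 2) / 4) * (‖gradient u x‖ ^ 2 - (2 / n) * u x * lapl u x)
        - (m * (m + n - 2) / (2 * n)) * (u x * lapl u x)) :
    k = 1 ∧
      (∃ c : ℝ, 0 < c ∧ ∀ x, lapl u x = c) ∧
      (∃ c : ℝ, c < 0 ∧ ∀ x, ‖gradient u x‖ ^ 2 - (2 / n) * u x * lapl u x = c) ∧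
      (∃ (α : ℝ) (b : EuclideanSpace ℝ (Fin n)) (γ : ℝ), 0 < α ∧ 4 * α * γ > ‖b‖ ^ 2 ∧
        ∀ x, u x = α * ‖x‖ ^ 2 + ⟪b, x⟫ + γ) := by
  obtain ⟨c, hlap, hgrad, huq⟩ := quad_of_hess (by omega) u hsmooth hhess
  set b := gradient u 0 with hbdef
  set γ := u 0 with hγdef
  have hn3 : (3:ℝ) ≤ (n:ℝ) := by exact_mod_cast hn
  have hne : (n:ℝ) ≠ 0 := by linarith
  have hγpos : 0 < γ := hpos 0
  have hknm : m + n - k > 0 := by nlinarith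
  -- gradient norm
  have hgn : ∀ x, ‖gradient u x‖^2 = c^2*‖x‖^2 + 2*c*⟪b,x⟫ + ‖b‖^2 := by
    intro x
    rw [hgrad x, norm_add_sq_real]
    rw [norm_smul, real_inner_smul_left, real_inner_comm]
    simp [mul_pow, sq_abs]
    ring
  -- the constant Q0
  have hQ : ∀ x, ‖gradient u x‖ ^ 2 - (2 / n) * u x * lapl u x = ‖b‖^2 - 2*c*γ := by
    intro x
    rw [hgn x, hlap x, huq x]
    field_simp
    ring
  set Q0 : ℝ := ‖b‖^2 - 2*c*γ with hQ0def
  set C0 : ℝ := -((m + n) * (m + n - 2) / 4) * Q0 with hC0def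
  set B1 : ℝ := m * (m + n - 2) * c / 2 with hB1def
  have hEL' : ∀ x, (m + n) * lam - 2 * (m + n - k) * mu * u x ^ k = C0 - B1 * u x := by
    intro x
    rw [hEL x, hQ x, hlap x]
    rw [hC0def, hB1def]
    field_simp
  -- rule out c = 0
  have hc0 : c ≠ 0 := by
    intro hc
    apply hnonconst
    refine ⟨γ, fun x => ?_⟩
    have h1 := hEL' x
    have h2 := hEL' 0
    rw [← hγdef] at h2
    have hkey : u x ^ k = γ ^ k := by
      rw [hc] at hB1def
      have hB10 : B1 = 0 := by rw [hB1def]; ring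
      rw [hB10] at h1 h2
      have : 2 * (m + n - k) * mu * u x ^ k = 2 * (m + n - k) * mu * γ ^ k := by linarith
      have hpm : 2 * (m + n - k) * mu ≠ 0 := by positivity
      exact mul_left_cancel₀ hpm this
    -- rpow injectivity on positives
    rcases lt_trichotomy (u x) γ with h | h | h
    · exfalso
      have := Real.rpow_lt_rpow (hpos x).le h hk
      rw [hkey] at this; exact lt_irrefl _ this
    · exact h
    · exfalso
      have := Real.rpow_lt_rpow hγpos.le h hk
      rw [hkey] at this; exact lt_irrefl _ this
  -- line direction
  set e0 : EuclideanSpace ℝ (Fin n) := EuclideanSpace.single (⟨0, by omega⟩ : Fin n) 1 with he0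
  set β : ℝ := ⟪b, e0⟫ with hβdef
  have huline : ∀ t : ℝ, u (t • e0) = c/2*t^2 + β*t + γ := by
    intro t
    rw [huq (t • e0)]
    have h1 : ‖t • e0‖^2 = t^2 := by
      rw [norm_smul, mul_pow, he0, EuclideanSpace.norm_single]
      simp [sq_abs]
    have h2 : ⟪b, t • e0⟫ = t * β := real_inner_smul_right b e0 t
    rw [h1, h2]; ring
  -- c is positive
  have hcpos : 0 < c := by
    rcases hc0.lt_or_gt with hcneg | h
    · exfalso
      set t0 : ℝ := 2*(|β|+|γ|+1)/(-c) + 1 with ht0def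
      have hcne : -c > 0 := by linarith
      have ht01 : 1 ≤ t0 := by
        have h := div_nonneg (by positivity : (0:ℝ) ≤ 2*(|β|+|γ|+1)) hcne.le
        rw [ht0def]
        linarith
      have hprod : (-c)*t0 = 2*(|β|+|γ|+1) + (-c) := by
        rw [ht0def]; field_simp
        try ring
      have hup := hpos (t0 • e0)
      rw [huline t0] at hup
      have h0t0 : (0:ℝ) ≤ t0 := by linarith
      have h1 : -c*t0*t0 = (2*(|β|+|γ|+1) + -c)*t0 := by rw [hprod]
      have hq2 : c/2*t0^2 = -(abs β * t0) - abs γ * t0 - t0 + c/2*t0 := by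
        linear_combination (-(1:ℝ)/2) * h1
      have hβt : β*t0 ≤ abs β * t0 := mul_le_mul_of_nonneg_right (le_abs_self β) h0t0
      have hγt : abs γ * 1 ≤ abs γ * t0 := mul_le_mul_of_nonneg_left ht01 (abs_nonneg γ)
      have hct : c/2*t0 ≤ c/2*1 := mul_le_mul_of_nonpos_left ht01 (by linarith : c/2 ≤ 0)
      have hγa := le_abs_self γ
      clear_value t0 β γ
      linarith [hup, hq2, hβt, hγt, hct, hγa, ht01]
    · exact h
  -- range of u contains [γ, ∞)
  have hrange : ∀ s, γ ≤ s → ∃ x, u x = s := by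
    intro s hs
    set X : ℝ := |β| + (s - γ) with hXdef
    have hX0 : 0 ≤ X := by
      have := abs_nonneg β; rw [hXdef]; linarith
    set T : ℝ := 2*X/c + 1 with hTdef
    have hT1 : 1 ≤ T := by
      have h := div_nonneg (by linarith : (0:ℝ) ≤ 2*X) hcpos.le
      rw [hTdef]
      linarith
    have hcT : c*T = 2*X + c := by
      rw [hTdef]; field_simp; try ring
    have hfT : s ≤ u (T • e0) := by
      rw [huline T]
      have h0T : (0:ℝ) ≤ T := by linarith
      have h1 : c*T*T = (2*X + c)*T := by rw [hcT]
      have hq2 : c/2*T^2 = X*T + c/2*T := by linear_combination ((1:ℝ)/2) * h1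
      have hXT : X*T = abs β * T + (s-γ)*T := by rw [hXdef]; ring
      have hβT : (-(abs β))*T ≤ β*T := mul_le_mul_of_nonneg_right (neg_abs_le β) h0T
      have hsT : (s-γ)*1 ≤ (s-γ)*T := mul_le_mul_of_nonneg_left hT1 (sub_nonneg.mpr hs)
      have hcT2 : 0 < c/2*T := mul_pos (half_pos hcpos) (by linarith)
      clear_value T X β γ
      linarith [hq2, hXT, hβT, hsT, hcT2, hs]
    have hcont : Continuous fun t : ℝ => u (t • e0) :=
      hsmooth.continuous.comp (continuous_id.smul continuous_const)
    have hIVT := intermediate_value_Icc (by linarith : (0:ℝ) ≤ T) hcont.continuousOn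
    have hmem : s ∈ Set.Icc (u ((0:ℝ) • e0)) (u (T • e0)) := by
      constructor
      · rw [huline 0]; simpa using hs
      · exact hfT
    obtain ⟨t, _, ht⟩ := hIVT hmem
    exact ⟨t • e0, ht⟩
  have key : ∀ s, γ ≤ s → (m + n) * lam - 2 * (m + n - k) * mu * s ^ k = C0 - B1 * s := by
    intro s hs
    obtain ⟨x, hx⟩ := hrange s hs
    have := hEL' x
    rw [hx] at this
    exact this
  -- the functional equation forces k = 1
  have hγk : 0 < γ ^ k := Real.rpow_pos_of_pos hγpos k
  set W : ℝ := 2 * (m + n - k) * mu * γ ^ k with hWdef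
  have hW : 0 < W := by positivity
  set V : ℝ := B1 * γ with hVdef
  have hr : ∀ r : ℝ, 1 ≤ r → W * (r ^ k - 1) = V * (r - 1) := by
    intro r hr1
    have h2 := key (γ*r) (by nlinarith)
    rw [Real.mul_rpow hγpos.le (by linarith : (0:ℝ) ≤ r)] at h2
    have h1 := key γ le_rfl
    rw [hWdef, hVdef]
    linear_combination h1 - h2
  set D : ℝ := V / W with hDdef
  have hD : ∀ r : ℝ, 1 ≤ r → r ^ k = 1 + D*(r-1) := by
    intro r hr1
    have h := hr r hr1
    rw [hDdef]
    field_simp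
    linear_combination h
  have h2k := hD 2 one_le_two
  have h4k := hD 4 (by norm_num)
  have h4k2 : (4:ℝ)^k = 2^k * 2^k := by
    rw [show (4:ℝ) = 2*2 by norm_num, Real.mul_rpow (by norm_num) (by norm_num)]
  have hDD : D * (D - 1) = 0 := by nlinarith [h2k, h4k, h4k2]
  have hk1 : k = 1 := by
    rcases mul_eq_zero.mp hDD with hD0 | hD1
    · exfalso
      rw [hD0] at h2k
      have h1 : (2:ℝ)^(0:ℝ) < (2:ℝ)^k := (Real.rpow_lt_rpow_left_iff one_lt_two).mpr hk
      rw [Real.rpow_zero] at h1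
      simp at h2k
      linarith
    · have hD1' : D = 1 := by linarith
      rw [hD1'] at h2k
      have h2k' : (2:ℝ)^k = 2 := by linarith
      by_contra hne1
      rcases lt_or_gt_of_ne hne1 with h | h
      · have := (Real.rpow_lt_rpow_left_iff (x := 2) one_lt_two).mpr h
        rw [Real.rpow_one] at this
        linarith
      · have := (Real.rpow_lt_rpow_left_iff (x := 2) one_lt_two).mpr h
        rw [Real.rpow_one] at this
        linarith
  -- identify the constants
  have key1 : ∀ s, γ ≤ s → (m + n) * lam - 2 * (m + n - 1) * mu * s = C0 - B1 * s := by
    intro s hs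
    have := key s hs
    rw [hk1, Real.rpow_one] at this
    exact this
  have e1 := key1 γ le_rfl
  have e2 := key1 (γ+1) (by linarith)
  have hB1val : B1 = 2 * (m + n - 1) * mu := by linarith
  have hC0val : C0 = (m + n) * lam := by nlinarith [e1, hB1val]
  have hQ0neg : Q0 < 0 := by
    rw [hC0def] at hC0val
    by_contra hcon
    push_neg at hcon
    have hmn : (0:ℝ) < (m+n)*(m+n-2) := by nlinarith
    have h1 : 0 ≤ (m+n)*(m+n-2)*Q0 := mul_nonneg hmn.le hcon
    have h2 : 0 < (m+n)*lam := mul_pos (by linarith) hlam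
    clear_value Q0
    linarith [hC0val, h1, h2]
  refine ⟨hk1, ⟨n*c, by positivity, hlap⟩, ⟨Q0, hQ0neg, hQ⟩,
    ⟨c/2, b, γ, by linarith, ?_, fun x => by rw [huq x]; try ring⟩⟩
  rw [hQ0def] at hQ0neg
  linarith
end
end

section
/- Let n ≥ 3 be an integer, m > 0 with m+n−2 > 0, let k, λ, μ be real numbers, and let Ω ⊆ ℝⁿ be open. Suppose w: Ω → (0,∞) is smooth and satisfies −Δw + 2(m+n−k)μ·w^{(m+n+2−2k)/(m+n−2)} = (m+n)λ·w^{(m+n+2)/(m+n−2)} on Ω. Then the function u = w^{−2/(m+n−2)} satisfies, at every point of Ω, (m+n)λ − 2(m+n−k)μ·u^k = −((m+n)(m+n−2)/4)·(|∇u|² − (2/n)uΔu) − (m(m+n−2)/(2n))·uΔu. -/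
open MeasureTheory
open scoped RealInnerProductSpace

noncomputable section

lemma norm_grad_sq {n : ℕ} (f : EuclideanSpace ℝ (Fin n) → ℝ) (x : EuclideanSpace ℝ (Fin n)) :
    ‖gradient f x‖ ^ 2 = ∑ i, (fderiv ℝ f x (EuclideanSpace.single i 1)) ^ 2 := by
  have h : ∀ v : EuclideanSpace ℝ (Fin n), fderiv ℝ f x v = ⟪gradient f x, v⟫ := by
    intro v
    rw [gradient, InnerProductSpace.toDual_symm_apply]
  rw [← real_inner_self_eq_norm_sq, PiLp.inner_apply]
  refine Finset.sum_congr rfl fun i _ => ?_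
  rw [h (EuclideanSpace.single i 1), EuclideanSpace.inner_single_right]
  simp [sq]

lemma conformal_derivs {n : ℕ} {Ω : Set (EuclideanSpace ℝ (Fin n))} (hΩ : IsOpen Ω)
    {w : EuclideanSpace ℝ (Fin n) → ℝ} (hsmooth : ContDiffOn ℝ (⊤ : ℕ∞) w Ω)
    (hpos : ∀ x ∈ Ω, 0 < w x) (α : ℝ) {x : EuclideanSpace ℝ (Fin n)} (hx : x ∈ Ω) :
    lapl (fun y => w y ^ α) x
      = α * w x ^ (α - 1) * lapl w x
        + α * (α - 1) * w x ^ (α - 2) * ‖gradient w x‖ ^ 2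
    ∧ ‖gradient (fun y => w y ^ α) x‖ ^ 2
      = (α * w x ^ (α - 1)) ^ 2 * ‖gradient w x‖ ^ 2 := by
  have hwx : 0 < w x := hpos x hx
  have hdiff : ∀ y ∈ Ω, DifferentiableAt ℝ w y := fun y hy =>
    (hsmooth.contDiffAt (hΩ.mem_nhds hy)).differentiableAt (by simp)
  have hfd : ∀ y ∈ Ω, fderiv ℝ (fun z => w z ^ α) y
      = (α * w y ^ (α - 1)) • fderiv ℝ w y := fun y hy =>
    (((hdiff y hy).hasFDerivAt).rpow_const (Or.inl (hpos y hy).ne')).fderiv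
  have hgradu : gradient (fun z => w z ^ α) x = (α * w x ^ (α - 1)) • gradient w x := by
    rw [gradient, gradient, hfd x hx, _root_.map_smul]
  constructor
  · -- Laplacian
    have hev : fderiv ℝ (fun z => w z ^ α)
        =ᶠ[nhds x] fun y => (α * w y ^ (α - 1)) • fderiv ℝ w y := by
      filter_upwards [hΩ.mem_nhds hx] with y hy using hfd y hy
    have hc : DifferentiableAt ℝ (fun y => α * w y ^ (α - 1)) x :=
      ((hdiff x hx).rpow_const (Or.inl hwx.ne')).const_mul α
    have hf' : DifferentiableAt ℝ (fderiv ℝ w) x :=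
      (((hsmooth.contDiffAt (hΩ.mem_nhds hx)).fderiv_right (m := 1) ((by exact WithTop.coe_le_coe.mpr le_top))).differentiableAt one_ne_zero)
    have hcderiv : fderiv ℝ (fun y => α * w y ^ (α - 1)) x
        = (α * ((α - 1) * w x ^ (α - 1 - 1))) • fderiv ℝ w x := by
      rw [fderiv_const_mul ((hdiff x hx).rpow_const (Or.inl hwx.ne')) α,
        (((hdiff x hx).hasFDerivAt).rpow_const (Or.inl hwx.ne')).fderiv, smul_smul]
    have h2 : fderiv ℝ (fderiv ℝ (fun z => w z ^ α)) x
        = (α * w x ^ (α - 1)) • fderiv ℝ (fderiv ℝ w) x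
          + (fderiv ℝ (fun y => α * w y ^ (α - 1)) x).smulRight (fderiv ℝ w x) := by
      rw [hev.fderiv_eq, fderiv_fun_smul hc hf']
    have key : ∀ v : EuclideanSpace ℝ (Fin n),
        iteratedFDeriv ℝ 2 (fun z => w z ^ α) x ![v, v]
          = α * w x ^ (α - 1) * iteratedFDeriv ℝ 2 w x ![v, v]
            + α * (α - 1) * w x ^ (α - 2) * (fderiv ℝ w x v) ^ 2 := by
      intro v
      rw [iteratedFDeriv_two_apply, iteratedFDeriv_two_apply]
      simp only [Matrix.cons_val_zero, Matrix.cons_val_one, Matrix.head_cons]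
      rw [h2, hcderiv]
      simp only [ContinuousLinearMap.add_apply, ContinuousLinearMap.smul_apply,
        ContinuousLinearMap.smulRight_apply, smul_eq_mul]
      have : α - 1 - 1 = α - 2 := by ring
      rw [this]; ring
    rw [lapl, lapl, norm_grad_sq]
    simp only [key]
    rw [Finset.sum_add_distrib, ← Finset.mul_sum, ← Finset.mul_sum]
  · rw [hgradu, norm_smul, mul_pow, Real.norm_eq_abs, sq_abs]

/-- rewriting the Euler–Lagrange equation for `w` in terms of the
conformal factor `u = w^{-2/(m+n-2)}`. -/
theorem gns_el_in_conformal_factor (n : ℕ) (hn : 3 ≤ n) (m : ℝ) (hm : 0 < m)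
    (hmn : 0 < m + n - 2) (k lam mu : ℝ)
    (Ω : Set (EuclideanSpace ℝ (Fin n))) (hΩ : IsOpen Ω)
    (w : EuclideanSpace ℝ (Fin n) → ℝ)
    (hsmooth : ContDiffOn ℝ (⊤ : ℕ∞) w Ω) (hpos : ∀ x ∈ Ω, 0 < w x)
    (hEL : ∀ x ∈ Ω, -lapl w x
        + 2 * (m + n - k) * mu * w x ^ ((m + n + 2 - 2 * k) / (m + (n : ℝ) - 2))
      = (m + n) * lam * w x ^ ((m + (n : ℝ) + 2) / (m + (n : ℝ) - 2))) :
    ∀ x ∈ Ω,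
      (m + n) * lam - 2 * (m + n - k) * mu *
          (w x ^ (-2 / (m + (n : ℝ) - 2))) ^ k
        = -((m + n) * (m + n - 2) / 4) *
            (‖gradient (fun y => w y ^ (-2 / (m + (n : ℝ) - 2))) x‖ ^ 2
              - (2 / (n : ℝ)) * w x ^ (-2 / (m + (n : ℝ) - 2)) *
                lapl (fun y => w y ^ (-2 / (m + (n : ℝ) - 2))) x)
          - (m * (m + n - 2) / (2 * n)) *
            (w x ^ (-2 / (m + (n : ℝ) - 2)) *
              lapl (fun y => w y ^ (-2 / (m + (n : ℝ) - 2))) x) := by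
  intro x hx
  have hW : 0 < w x := hpos x hx
  have hnpos : (0 : ℝ) < n := by exact_mod_cast (by omega : 0 < n)
  have hn0 : (n : ℝ) ≠ 0 := hnpos.ne'
  have hs : m + (n : ℝ) - 2 ≠ 0 := ne_of_gt hmn
  set α : ℝ := -2 / (m + (n : ℝ) - 2) with hα
  obtain ⟨hlap, hgrad⟩ := conformal_derivs hΩ hsmooth hpos α hx
  have hc1 : 2 * α - 1 + (m + (n : ℝ) + 2) / (m + (n : ℝ) - 2) = 0 := by
    rw [hα]; field_simp; ring
  have hc2 : 2 * α - 1 + (m + (n : ℝ) + 2 - 2 * k) / (m + (n : ℝ) - 2) = α * k := by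
    rw [hα]; field_simp; ring
  have p1 : w x ^ (2 * α - 1) * w x ^ ((m + (n : ℝ) + 2) / (m + (n : ℝ) - 2)) = 1 := by
    rw [← Real.rpow_add hW, hc1, Real.rpow_zero]
  have p2 : w x ^ (2 * α - 1) * w x ^ ((m + (n : ℝ) + 2 - 2 * k) / (m + (n : ℝ) - 2))
      = w x ^ (α * k) := by
    rw [← Real.rpow_add hW, hc2]
  have key : (m + n) * lam - 2 * (m + n - k) * mu * w x ^ (α * k)
      = -(w x ^ (2 * α - 1)) * lapl w x := by
    have h := hEL x hx
    linear_combination (-(w x ^ (2 * α - 1))) * h - (m + n) * lam * p1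
      + 2 * (m + n - k) * mu * p2
  have q1 : w x ^ (α - 1) * w x ^ (α - 1) = w x ^ (2 * α - 2) := by
    rw [← Real.rpow_add hW]; congr 1; ring
  have q2 : w x ^ α * w x ^ (α - 1) = w x ^ (2 * α - 1) := by
    rw [← Real.rpow_add hW]; congr 1; ring
  have q3 : w x ^ α * w x ^ (α - 2) = w x ^ (2 * α - 2) := by
    rw [← Real.rpow_add hW]; congr 1; ring
  have c1 : -((m + (n : ℝ)) * (m + (n : ℝ) - 2) / 4) * α ^ 2
      + ((m + (n : ℝ)) * (m + (n : ℝ) - 2) / (2 * (n : ℝ))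
          - m * (m + (n : ℝ) - 2) / (2 * (n : ℝ))) * α * (α - 1) = 0 := by
    rw [hα]; field_simp; ring
  have c2 : ((m + (n : ℝ)) * (m + (n : ℝ) - 2) / (2 * (n : ℝ))
      - m * (m + (n : ℝ) - 2) / (2 * (n : ℝ))) * α = -1 := by
    rw [hα]; field_simp; ring
  rw [hlap, hgrad, ← Real.rpow_mul hW.le, key]
  linear_combination ((m + (n : ℝ)) * (m + (n : ℝ) - 2) / 4 * α ^ 2 * ‖gradient w x‖ ^ 2) * q1
    - (((m + (n : ℝ)) * (m + (n : ℝ) - 2) / (2 * (n : ℝ))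
        - m * (m + (n : ℝ) - 2) / (2 * (n : ℝ))) * α * lapl w x) * q2
    - (((m + (n : ℝ)) * (m + (n : ℝ) - 2) / (2 * (n : ℝ))
        - m * (m + (n : ℝ) - 2) / (2 * (n : ℝ))) * α * (α - 1) * ‖gradient w x‖ ^ 2) * q3
    - (w x ^ (2 * α - 2) * ‖gradient w x‖ ^ 2) * c1
    - (w x ^ (2 * α - 1) * lapl w x) * c2
end
end

section
/- Let n ≥ 2 be an integer and Ω ⊆ ℝⁿ an open set. Let u, v: Ω → ℝ be smooth functions such that Hess v(x) = (Δv(x)/n)·Id for all x ∈ Ω and ∇(Δv) ≡ 0 on Ω. Define G = ⟨∇u, ∇v⟩ − (uΔv + vΔu)/n and H = |∇u|² − (2/n)uΔu on Ω. Then at every point of Ω at which u ≠ 0 and v ≠ 0, one has u^{n−2}·div(u^{2−n}·∇G) − (v^{n−1}/(2u))·div(v^{2−n}·∇H) = −(v/u)·‖Hess u − (Δu/n)·Id‖_F², where div denotes the Euclidean divergence of a vector field and ‖·‖_F the Frobenius norm of a matrix. -/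
open MeasureTheory
open scoped RealInnerProductSpace

noncomputable section

/-- The Euclidean divergence `div X = Σᵢ ∂Xᵢ/∂xᵢ` of a vector field. -/
def divg {n : ℕ} (X : EuclideanSpace ℝ (Fin n) → EuclideanSpace ℝ (Fin n))
    (x : EuclideanSpace ℝ (Fin n)) : ℝ :=
  ∑ i, fderiv ℝ (fun y => X y i) x (EuclideanSpace.single i 1)

namespace ObataAux
variable {n : ℕ} {F : Type*} [NormedAddCommGroup F] [NormedSpace ℝ F]
variable {E' : Type*} [NormedAddCommGroup E'] [NormedSpace ℝ E']

def ee {n : ℕ} (i : Fin n) : EuclideanSpace ℝ (Fin n) := EuclideanSpace.single i 1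

lemma hess_eq (f : EuclideanSpace ℝ (Fin n) → ℝ) (x : EuclideanSpace ℝ (Fin n)) (i j : Fin n) :
    hess f x i j = fderiv ℝ (fderiv ℝ f) x (ee i) (ee j) := by
  rw [hess, iteratedFDeriv_two_apply]; rfl

lemma lapl_eq' (f : EuclideanSpace ℝ (Fin n) → ℝ) :
    lapl f = fun x => ∑ i, fderiv ℝ (fderiv ℝ f) x (ee i) (ee i) := by
  funext x
  rw [lapl]
  refine Finset.sum_congr rfl fun i _ => ?_
  rw [iteratedFDeriv_two_apply]; rfl

lemma lapl_eq (f : EuclideanSpace ℝ (Fin n) → ℝ) (x : EuclideanSpace ℝ (Fin n)) :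
    lapl f x = ∑ i, fderiv ℝ (fderiv ℝ f) x (ee i) (ee i) := by
  rw [lapl_eq']

lemma inner_ee (a : EuclideanSpace ℝ (Fin n)) (i : Fin n) : ⟪a, ee i⟫ = a i := by
  simp [ee, EuclideanSpace.inner_single_right]

lemma gradient_coord (f : EuclideanSpace ℝ (Fin n) → ℝ) (x : EuclideanSpace ℝ (Fin n)) (i : Fin n) :
    gradient f x i = fderiv ℝ f x (ee i) := by
  rw [← inner_ee (gradient f x) i, gradient, InnerProductSpace.toDual_symm_apply]

lemma fderiv_eq_zero_of_gradient_eq_zero {f : EuclideanSpace ℝ (Fin n) → ℝ}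
    {x : EuclideanSpace ℝ (Fin n)} (h : gradient f x = 0) : fderiv ℝ f x = 0 := by
  have := congrArg (InnerProductSpace.toDual ℝ (EuclideanSpace ℝ (Fin n))) h
  rwa [gradient, LinearIsometryEquiv.apply_symm_apply, map_zero] at this

lemma inner_eq_sum (a b : EuclideanSpace ℝ (Fin n)) : ⟪a, b⟫ = ∑ i, a i * b i := by
  simp [PiLp.inner_apply, RCLike.inner_apply]
  exact Finset.sum_congr rfl fun i _ => mul_comm _ _

lemma norm_sq_eq_sum (a : EuclideanSpace ℝ (Fin n)) : ‖a‖ ^ 2 = ∑ i, a i * a i := by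
  rw [← real_inner_self_eq_norm_sq, inner_eq_sum]

lemma fderiv_clm_const {g : E' → (E' →L[ℝ] F)} {x : E'} (hg : DifferentiableAt ℝ g x)
    (w z : E') : fderiv ℝ (fun y => g y w) x z = fderiv ℝ g x z w := by
  rw [fderiv_clm_apply hg (differentiableAt_const w)]; simp

lemma diff_clm_const {g : E' → (E' →L[ℝ] F)} {x : E'} (hg : DifferentiableAt ℝ g x)
    (w : E') : DifferentiableAt ℝ (fun y => g y w) x :=
  hg.clm_apply (differentiableAt_const w)

lemma smooth_fderiv {f : E' → F} {x : E'} (hf : ContDiffAt ℝ (⊤ : ℕ∞) f x) :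
    ContDiffAt ℝ (⊤ : ℕ∞) (fderiv ℝ f) x := hf.fderiv_right (by simp)

lemma smooth_clm_const {g : E' → (E' →L[ℝ] F)} {x : E'} (hg : ContDiffAt ℝ (⊤ : ℕ∞) g x) (w : E') :
    ContDiffAt ℝ (⊤ : ℕ∞) (fun y => g y w) x := hg.clm_apply contDiffAt_const

lemma schwarz {f : E' → F} {x : E'} (hf : ContDiffAt ℝ (⊤ : ℕ∞) f x) (a b : E') :
    fderiv ℝ (fderiv ℝ f) x a b = fderiv ℝ (fderiv ℝ f) x b a :=
  (hf.isSymmSndFDerivAt (by simp; exact WithTop.coe_le_coe.mpr le_top)) a b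

lemma smooth_lapl {f : EuclideanSpace ℝ (Fin n) → ℝ} {x : EuclideanSpace ℝ (Fin n)}
    (hf : ContDiffAt ℝ (⊤ : ℕ∞) f x) : ContDiffAt ℝ (⊤ : ℕ∞) (lapl f) x := by
  rw [lapl_eq']
  exact ContDiffAt.sum fun i _ =>
    smooth_clm_const (smooth_clm_const (smooth_fderiv (smooth_fderiv hf)) (ee i)) (ee i)

lemma fderiv_lapl {f : EuclideanSpace ℝ (Fin n) → ℝ} {x : EuclideanSpace ℝ (Fin n)}
    (hf : ContDiffAt ℝ (⊤ : ℕ∞) f x) (z : EuclideanSpace ℝ (Fin n)) :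
    fderiv ℝ (lapl f) x z = ∑ i, fderiv ℝ (fderiv ℝ (fderiv ℝ f)) x z (ee i) (ee i) := by
  have dA : DifferentiableAt ℝ (fderiv ℝ (fderiv ℝ f)) x :=
    (smooth_fderiv (smooth_fderiv hf)).differentiableAt (by simp)
  rw [lapl_eq']
  rw [fderiv_fun_sum (fun i _ => diff_clm_const (diff_clm_const dA (ee i)) (ee i))]
  rw [ContinuousLinearMap.sum_apply]
  refine Finset.sum_congr rfl fun i _ => ?_
  rw [fderiv_clm_const (diff_clm_const dA (ee i)) (ee i) z,
    fderiv_clm_const dA (ee i) z]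

lemma T_swap12 {f : E' → ℝ} {x : E'} (hf : ContDiffAt ℝ (⊤ : ℕ∞) f x) (a b c : E') :
    fderiv ℝ (fderiv ℝ (fderiv ℝ f)) x a b c = fderiv ℝ (fderiv ℝ (fderiv ℝ f)) x b a c :=
  congrArg (fun L => L c) (schwarz (smooth_fderiv hf) a b)

lemma T_swap23 {s : Set E'} (hs : IsOpen s) {f : E' → ℝ}
    (hf : ∀ y ∈ s, ContDiffAt ℝ (⊤ : ℕ∞) f y) {x : E'} (hx : x ∈ s) (a b c : E') :
    fderiv ℝ (fderiv ℝ (fderiv ℝ f)) x a b c = fderiv ℝ (fderiv ℝ (fderiv ℝ f)) x a c b := by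
  have dA : DifferentiableAt ℝ (fderiv ℝ (fderiv ℝ f)) x :=
    (smooth_fderiv (smooth_fderiv (hf x hx))).differentiableAt (by simp)
  have key : ∀ b c : E', fderiv ℝ (fun y => fderiv ℝ (fderiv ℝ f) y b c) x a
      = fderiv ℝ (fderiv ℝ (fderiv ℝ f)) x a b c := by
    intro b c
    rw [fderiv_clm_const (g := fun y => fderiv ℝ (fderiv ℝ f) y b) (diff_clm_const dA b) c a,
      fderiv_clm_const dA b a]
  have h1 : (fun y => fderiv ℝ (fderiv ℝ f) y b c) =ᶠ[nhds x]
      (fun y => fderiv ℝ (fderiv ℝ f) y c b) := by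
    filter_upwards [hs.mem_nhds hx] with y hy using schwarz (hf y hy) b c
  rw [← key b c, ← key c b, h1.fderiv_eq]

lemma sum_T {s : Set (EuclideanSpace ℝ (Fin n))} (hs : IsOpen s)
    {f : EuclideanSpace ℝ (Fin n) → ℝ}
    (hf : ∀ y ∈ s, ContDiffAt ℝ (⊤ : ℕ∞) f y) {x : EuclideanSpace ℝ (Fin n)} (hx : x ∈ s) (k : Fin n) :
    fderiv ℝ (lapl f) x (ee k) = ∑ i, fderiv ℝ (fderiv ℝ (fderiv ℝ f)) x (ee i) (ee i) (ee k) := by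
  rw [fderiv_lapl (hf x hx) (ee k)]
  refine Finset.sum_congr rfl fun i _ => ?_
  rw [T_swap12 (hf x hx), T_swap23 hs hf hx]

lemma diff_div_c {c : E' → ℝ} {x : E'} (hc : DifferentiableAt ℝ c x) (m : ℝ) :
    DifferentiableAt ℝ (fun y => c y / m) x := by
  simpa only [div_eq_mul_inv] using hc.mul_const m⁻¹

lemma fderiv_div_c {c : E' → ℝ} {x : E'} (hc : DifferentiableAt ℝ c x) (m : ℝ) (z : E') :
    fderiv ℝ (fun y => c y / m) x z = fderiv ℝ c x z / m := by
  simp only [div_eq_mul_inv]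
  rw [fderiv_mul_const hc]
  simp [mul_comm]

lemma fderiv_mul_apply {c d : E' → ℝ} {x : E'} (hc : DifferentiableAt ℝ c x)
    (hd : DifferentiableAt ℝ d x) (z : E') :
    fderiv ℝ (fun y => c y * d y) x z = fderiv ℝ c x z * d x + c x * fderiv ℝ d x z := by
  rw [fderiv_fun_mul hc hd]; simp; ring

/-- The formula for the coordinates of the gradients of `G` and `H`. -/
def Wfun (u φ : EuclideanSpace ℝ (Fin n) → ℝ) (i : Fin n) (y : EuclideanSpace ℝ (Fin n)) : ℝ :=
  (∑ k, fderiv ℝ (fderiv ℝ u) y (ee i) (ee k) * fderiv ℝ φ y (ee k))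
  - (fderiv ℝ φ y (ee i) * lapl u y + φ y * fderiv ℝ (lapl u) y (ee i)) / n

set_option maxHeartbeats 1000000 in
lemma raw_grad {u φ : EuclideanSpace ℝ (Fin n) → ℝ} {y : EuclideanSpace ℝ (Fin n)}
    (hu : ContDiffAt ℝ (⊤ : ℕ∞) u y) (hφ : ContDiffAt ℝ (⊤ : ℕ∞) φ y) (i : Fin n) :
    fderiv ℝ (fun z => (∑ k, fderiv ℝ u z (ee k) * fderiv ℝ φ z (ee k))
        - (u z * lapl φ z + φ z * lapl u z) / n) y (ee i)
    = (∑ k, (fderiv ℝ (fderiv ℝ u) y (ee i) (ee k) * fderiv ℝ φ y (ee k)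
           + fderiv ℝ u y (ee k) * fderiv ℝ (fderiv ℝ φ) y (ee i) (ee k)))
      - (fderiv ℝ u y (ee i) * lapl φ y + u y * fderiv ℝ (lapl φ) y (ee i)
         + (fderiv ℝ φ y (ee i) * lapl u y + φ y * fderiv ℝ (lapl u) y (ee i))) / n := by
  have dU := (smooth_fderiv hu).differentiableAt (by simp)
  have dΦ := (smooth_fderiv hφ).differentiableAt (by simp)
  have dpu : ∀ k : Fin n, DifferentiableAt ℝ (fun z => fderiv ℝ u z (ee k)) y :=
    fun k => diff_clm_const dU (ee k)
  have dpφ : ∀ k : Fin n, DifferentiableAt ℝ (fun z => fderiv ℝ φ z (ee k)) y :=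
    fun k => diff_clm_const dΦ (ee k)
  have dS : DifferentiableAt ℝ (fun z => ∑ k, fderiv ℝ u z (ee k) * fderiv ℝ φ z (ee k)) y :=
    DifferentiableAt.fun_sum fun k _ => (dpu k).fun_mul (dpφ k)
  have du := hu.differentiableAt (by simp)
  have dφ' := hφ.differentiableAt (by simp)
  have dlu : DifferentiableAt ℝ (lapl u) y := (smooth_lapl hu).differentiableAt (by simp)
  have dlφ : DifferentiableAt ℝ (lapl φ) y := (smooth_lapl hφ).differentiableAt (by simp)
  have dR : DifferentiableAt ℝ (fun z => (u z * lapl φ z + φ z * lapl u z) / ↑n) y :=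
    diff_div_c ((du.fun_mul dlφ).fun_add (dφ'.fun_mul dlu)) (n : ℝ)
  rw [fderiv_fun_sub dS dR, ContinuousLinearMap.sub_apply]
  congr 1
  · rw [fderiv_fun_sum (fun k _ => (dpu k).fun_mul (dpφ k)), ContinuousLinearMap.sum_apply]
    refine Finset.sum_congr rfl fun k _ => ?_
    rw [fderiv_mul_apply (dpu k) (dpφ k), fderiv_clm_const dU (ee k),
      fderiv_clm_const dΦ (ee k)]
  · rw [fderiv_div_c ((du.fun_mul dlφ).fun_add (dφ'.fun_mul dlu)) (n : ℝ)]
    congr 1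
    rw [fderiv_fun_add (du.fun_mul dlφ) (dφ'.fun_mul dlu), ContinuousLinearMap.add_apply,
      fderiv_mul_apply du dlφ, fderiv_mul_apply dφ' dlu]

set_option maxHeartbeats 1000000 in
lemma W_deriv {u φ : EuclideanSpace ℝ (Fin n) → ℝ} {x : EuclideanSpace ℝ (Fin n)}
    (hu : ContDiffAt ℝ (⊤ : ℕ∞) u x) (hφ : ContDiffAt ℝ (⊤ : ℕ∞) φ x) (i : Fin n) :
    DifferentiableAt ℝ (Wfun u φ i) x ∧
    fderiv ℝ (Wfun u φ i) x (ee i)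
    = (∑ k, (fderiv ℝ (fderiv ℝ (fderiv ℝ u)) x (ee i) (ee i) (ee k) * fderiv ℝ φ x (ee k)
           + fderiv ℝ (fderiv ℝ u) x (ee i) (ee k) * fderiv ℝ (fderiv ℝ φ) x (ee i) (ee k)))
      - (fderiv ℝ (fderiv ℝ φ) x (ee i) (ee i) * lapl u x
         + fderiv ℝ φ x (ee i) * fderiv ℝ (lapl u) x (ee i)
         + (fderiv ℝ φ x (ee i) * fderiv ℝ (lapl u) x (ee i)
            + φ x * fderiv ℝ (fderiv ℝ (lapl u)) x (ee i) (ee i))) / n := by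
  have dA : DifferentiableAt ℝ (fderiv ℝ (fderiv ℝ u)) x :=
    (smooth_fderiv (smooth_fderiv hu)).differentiableAt (by simp)
  have dΦ := (smooth_fderiv hφ).differentiableAt (by simp)
  have dAik : ∀ k : Fin n, DifferentiableAt ℝ (fun y => fderiv ℝ (fderiv ℝ u) y (ee i) (ee k)) x :=
    fun k => diff_clm_const (diff_clm_const dA (ee i)) (ee k)
  have dpφ : ∀ k : Fin n, DifferentiableAt ℝ (fun y => fderiv ℝ φ y (ee k)) x :=
    fun k => diff_clm_const dΦ (ee k)
  have dφ' := hφ.differentiableAt (by simp)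
  have dlu : DifferentiableAt ℝ (lapl u) x := (smooth_lapl hu).differentiableAt (by simp)
  have dWlu : DifferentiableAt ℝ (fderiv ℝ (lapl u)) x :=
    (smooth_fderiv (smooth_lapl hu)).differentiableAt (by simp)
  have dwu : DifferentiableAt ℝ (fun y => fderiv ℝ (lapl u) y (ee i)) x :=
    diff_clm_const dWlu (ee i)
  have dS : DifferentiableAt ℝ
      (fun y => ∑ k, fderiv ℝ (fderiv ℝ u) y (ee i) (ee k) * fderiv ℝ φ y (ee k)) x :=
    DifferentiableAt.fun_sum fun k _ => (dAik k).fun_mul (dpφ k)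
  have dR : DifferentiableAt ℝ
      (fun y => (fderiv ℝ φ y (ee i) * lapl u y + φ y * fderiv ℝ (lapl u) y (ee i)) / ↑n) x :=
    diff_div_c (((dpφ i).fun_mul dlu).fun_add (dφ'.fun_mul dwu)) (n : ℝ)
  constructor
  · exact dS.sub dR
  rw [show (Wfun u φ i : EuclideanSpace ℝ (Fin n) → ℝ) = fun y =>
      (∑ k, fderiv ℝ (fderiv ℝ u) y (ee i) (ee k) * fderiv ℝ φ y (ee k))
      - (fderiv ℝ φ y (ee i) * lapl u y + φ y * fderiv ℝ (lapl u) y (ee i)) / ↑n from rfl]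
  rw [fderiv_fun_sub dS dR, ContinuousLinearMap.sub_apply]
  congr 1
  · rw [fderiv_fun_sum (fun k _ => (dAik k).fun_mul (dpφ k)), ContinuousLinearMap.sum_apply]
    refine Finset.sum_congr rfl fun k _ => ?_
    rw [fderiv_mul_apply (dAik k) (dpφ k), fderiv_clm_const dΦ (ee k)]
    congr 2
    rw [fderiv_clm_const (diff_clm_const dA (ee i)) (ee k), fderiv_clm_const dA (ee i)]
  · rw [fderiv_div_c (((dpφ i).fun_mul dlu).fun_add (dφ'.fun_mul dwu)) (n : ℝ)]
    congr 1
    rw [fderiv_fun_add ((dpφ i).fun_mul dlu) (dφ'.fun_mul dwu), ContinuousLinearMap.add_apply,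
      fderiv_mul_apply (dpφ i) dlu, fderiv_mul_apply dφ' dwu,
      fderiv_clm_const dΦ (ee i), fderiv_clm_const dWlu (ee i)]

lemma divg_expand {c Fn : EuclideanSpace ℝ (Fin n) → ℝ}
    {W : Fin n → EuclideanSpace ℝ (Fin n) → ℝ}
    {x : EuclideanSpace ℝ (Fin n)} (m : ℤ)
    (hc : DifferentiableAt ℝ c x) (hcx : c x ≠ 0)
    (hW : ∀ᶠ y in nhds x, ∀ i, gradient Fn y i = W i y)
    (hdW : ∀ i, DifferentiableAt ℝ (W i) x) :
    divg (fun y => c y ^ m • gradient Fn y) x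
    = ∑ i, ((m : ℝ) * c x ^ (m - 1) * fderiv ℝ c x (ee i) * W i x
          + c x ^ m * fderiv ℝ (W i) x (ee i)) := by
  rw [divg]
  refine Finset.sum_congr rfl fun i _ => ?_
  have hev : (fun y => (c y ^ m • gradient Fn y) i) =ᶠ[nhds x] fun y => c y ^ m * W i y := by
    filter_upwards [hW] with y hy
    simp [hy i]
  have h1 : HasFDerivAt (fun y => c y ^ m) (((m : ℝ) * c x ^ (m - 1)) • fderiv ℝ c x) x := by
    have := (hasDerivAt_zpow m (c x) (Or.inl hcx)).comp_hasFDerivAt x hc.hasFDerivAt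
    simpa [Function.comp_def] using this
  have h2 := h1.fun_mul (hdW i).hasFDerivAt
  rw [show (EuclideanSpace.single i 1 : EuclideanSpace ℝ (Fin n)) = ee i from rfl]
  rw [hev.fderiv_eq, h2.fderiv]
  simp only [ContinuousLinearMap.add_apply, ContinuousLinearMap.smul_apply, smul_eq_mul]
  ring

lemma final_algebra (n : ℕ) (hn : 2 ≤ n) (a b L lam S1 S2 pq pw qw MM : ℝ)
    (ha : a ≠ 0) (hb : b ≠ 0) :
    a ^ ((n : ℤ) - 2) *
      ((((2 : ℤ) - n : ℤ) : ℝ) * a ^ ((2 : ℤ) - n - 1) * (S1 - (pq * L + b * pw) / n)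
        + a ^ ((2 : ℤ) - n) * (qw + lam / n * L - (lam * L + 2 * qw + b * MM) / n))
    - (b ^ ((n : ℤ) - 1) / (2 * a)) *
      ((((2 : ℤ) - n : ℤ) : ℝ) * b ^ ((2 : ℤ) - n - 1) * 2 * (S1 - (pq * L + a * qw) / n)
        + b ^ ((2 : ℤ) - n) * 2 * (pw + S2 - (L * L + 2 * pw + a * MM) / n))
    = -(b / a) * (S2 - L ^ 2 / n) := by
  have hn0 : (n : ℝ) ≠ 0 := Nat.cast_ne_zero.mpr (by omega)
  have e1 : a ^ ((n : ℤ) - 2) * a ^ ((2 : ℤ) - n) = 1 := by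
    rw [← zpow_add₀ ha, show ((n : ℤ) - 2) + ((2 : ℤ) - n) = 0 by ring, zpow_zero]
  have e2 : a ^ ((n : ℤ) - 2) * a ^ ((2 : ℤ) - n - 1) = a⁻¹ := by
    rw [← zpow_add₀ ha, show ((n : ℤ) - 2) + ((2 : ℤ) - n - 1) = -1 by ring, zpow_neg_one]
  have e3 : b ^ ((n : ℤ) - 1) * b ^ ((2 : ℤ) - n) = b := by
    rw [← zpow_add₀ hb, show ((n : ℤ) - 1) + ((2 : ℤ) - n) = 1 by ring, zpow_one]
  have e4 : b ^ ((n : ℤ) - 1) * b ^ ((2 : ℤ) - n - 1) = 1 := by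
    rw [← zpow_add₀ hb, show ((n : ℤ) - 1) + ((2 : ℤ) - n - 1) = 0 by ring, zpow_zero]
  have expand : a ^ ((n : ℤ) - 2) *
      ((((2 : ℤ) - n : ℤ) : ℝ) * a ^ ((2 : ℤ) - n - 1) * (S1 - (pq * L + b * pw) / n)
        + a ^ ((2 : ℤ) - n) * (qw + lam / n * L - (lam * L + 2 * qw + b * MM) / n))
    - (b ^ ((n : ℤ) - 1) / (2 * a)) *
      ((((2 : ℤ) - n : ℤ) : ℝ) * b ^ ((2 : ℤ) - n - 1) * 2 * (S1 - (pq * L + a * qw) / n)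
        + b ^ ((2 : ℤ) - n) * 2 * (pw + S2 - (L * L + 2 * pw + a * MM) / n))
    = (((2 : ℤ) - n : ℤ) : ℝ) * (a ^ ((n : ℤ) - 2) * a ^ ((2 : ℤ) - n - 1))
        * (S1 - (pq * L + b * pw) / n)
      + (a ^ ((n : ℤ) - 2) * a ^ ((2 : ℤ) - n))
        * (qw + lam / n * L - (lam * L + 2 * qw + b * MM) / n)
      - ((((2 : ℤ) - n : ℤ) : ℝ) * (b ^ ((n : ℤ) - 1) * b ^ ((2 : ℤ) - n - 1))
          * (S1 - (pq * L + a * qw) / n)) / a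
      - ((b ^ ((n : ℤ) - 1) * b ^ ((2 : ℤ) - n))
          * (pw + S2 - (L * L + 2 * pw + a * MM) / n)) / a := by
    field_simp
    ring
  rw [expand, e1, e2, e3, e4]
  push_cast
  field_simp
  ring

end ObataAux

open ObataAux

set_option maxHeartbeats 4000000 in
/-- the Euclidean case of the divergence-type tractor lemma
localizing Obata's argument. -/
theorem obata_divergence_lemma (n : ℕ) (hn : 2 ≤ n)
    (Ω : Set (EuclideanSpace ℝ (Fin n))) (hΩ : IsOpen Ω)
    (u v : EuclideanSpace ℝ (Fin n) → ℝ)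
    (hu : ContDiffOn ℝ (⊤ : ℕ∞) u Ω) (hv : ContDiffOn ℝ (⊤ : ℕ∞) v Ω)
    (hvhess : ∀ x ∈ Ω, ∀ i j, hess v x i j = (lapl v x / n) * (if i = j then 1 else 0))
    (hvlap : ∀ x ∈ Ω, gradient (lapl v) x = 0)
    (G H : EuclideanSpace ℝ (Fin n) → ℝ)
    (hG : ∀ y, G y = ⟪gradient u y, gradient v y⟫ - (u y * lapl v y + v y * lapl u y) / n)
    (hH : ∀ y, H y = ‖gradient u y‖ ^ 2 - (2 / n) * u y * lapl u y) :
    ∀ x ∈ Ω, u x ≠ 0 → v x ≠ 0 →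
      u x ^ ((n : ℤ) - 2) * divg (fun y => u y ^ ((2 : ℤ) - n) • gradient G y) x
        - (v x ^ ((n : ℤ) - 1) / (2 * u x)) *
            divg (fun y => v y ^ ((2 : ℤ) - n) • gradient H y) x
      = -(v x / u x) *
          ∑ i, ∑ j, (hess u x i j - (lapl u x / n) * (if i = j then 1 else 0)) ^ 2 := by
  intro x hx hux hvx
  have hn0 : (n : ℝ) ≠ 0 := Nat.cast_ne_zero.mpr (by omega)
  have hsmu : ∀ y ∈ Ω, ContDiffAt ℝ (⊤ : ℕ∞) u y := fun y hy => hu.contDiffAt (hΩ.mem_nhds hy)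
  have hsmv : ∀ y ∈ Ω, ContDiffAt ℝ (⊤ : ℕ∞) v y := fun y hy => hv.contDiffAt (hΩ.mem_nhds hy)
  have hu' := hsmu x hx
  have hv' := hsmv x hx
  have hGfun : G = fun z => (∑ k, fderiv ℝ u z (ee k) * fderiv ℝ v z (ee k))
      - (u z * lapl v z + v z * lapl u z) / (n : ℝ) := by
    funext z
    rw [hG z, inner_eq_sum]
    congr 1
    exact Finset.sum_congr rfl fun k _ => by rw [gradient_coord, gradient_coord]
  have hHfun : H = fun z => (∑ k, fderiv ℝ u z (ee k) * fderiv ℝ u z (ee k))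
      - (u z * lapl u z + u z * lapl u z) / (n : ℝ) := by
    funext z
    rw [hH z, norm_sq_eq_sum]
    have h1 : ∑ i, gradient u z i * gradient u z i
        = ∑ k, fderiv ℝ u z (ee k) * fderiv ℝ u z (ee k) :=
      Finset.sum_congr rfl fun k _ => by rw [gradient_coord]
    rw [h1]
    ring
  have hfvlap : ∀ y ∈ Ω, fderiv ℝ (lapl v) y = 0 :=
    fun y hy => fderiv_eq_zero_of_gradient_eq_zero (hvlap y hy)
  have hvA : ∀ y ∈ Ω, ∀ i k : Fin n, fderiv ℝ (fderiv ℝ v) y (ee i) (ee k)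
      = (lapl v y / n) * (if i = k then 1 else 0) :=
    fun y hy i k => by rw [← hess_eq]; exact hvhess y hy i k
  have hWG : ∀ y ∈ Ω, ∀ i, gradient G y i = Wfun u v i y := by
    intro y hy i
    rw [gradient_coord, hGfun, raw_grad (hsmu y hy) (hsmv y hy) i, hfvlap y hy]
    have hsum : ∑ k, (fderiv ℝ (fderiv ℝ u) y (ee i) (ee k) * fderiv ℝ v y (ee k)
        + fderiv ℝ u y (ee k) * fderiv ℝ (fderiv ℝ v) y (ee i) (ee k))
        = (∑ k, fderiv ℝ (fderiv ℝ u) y (ee i) (ee k) * fderiv ℝ v y (ee k))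
          + fderiv ℝ u y (ee i) * (lapl v y / n) := by
      rw [Finset.sum_add_distrib]
      congr 1
      rw [show (∑ k, fderiv ℝ u y (ee k) * fderiv ℝ (fderiv ℝ v) y (ee i) (ee k))
          = ∑ k, (if i = k then fderiv ℝ u y (ee k) * (lapl v y / n) else 0) from
        Finset.sum_congr rfl fun k _ => by rw [hvA y hy i k]; split_ifs <;> ring]
      simp
    rw [hsum]
    simp only [Wfun, ContinuousLinearMap.zero_apply]
    ring
  have hWH : ∀ y ∈ Ω, ∀ i, gradient H y i = 2 * Wfun u u i y := by
    intro y hy i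
    rw [gradient_coord, hHfun, raw_grad (hsmu y hy) (hsmu y hy) i]
    have hsum : ∑ k, (fderiv ℝ (fderiv ℝ u) y (ee i) (ee k) * fderiv ℝ u y (ee k)
        + fderiv ℝ u y (ee k) * fderiv ℝ (fderiv ℝ u) y (ee i) (ee k))
        = 2 * ∑ k, fderiv ℝ (fderiv ℝ u) y (ee i) (ee k) * fderiv ℝ u y (ee k) := by
      rw [Finset.mul_sum]
      exact Finset.sum_congr rfl fun k _ => by ring
    rw [hsum]
    simp only [Wfun]
    ring
  have hWGe : ∀ᶠ y in nhds x, ∀ i, gradient G y i = Wfun u v i y := by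
    filter_upwards [hΩ.mem_nhds hx] with y hy using hWG y hy
  have hWHe : ∀ᶠ y in nhds x, ∀ i, gradient H y i = 2 * Wfun u u i y := by
    filter_upwards [hΩ.mem_nhds hx] with y hy using hWH y hy
  have EXPG := divg_expand ((2 : ℤ) - n) (hu'.differentiableAt (by simp)) hux hWGe
    (fun i => (W_deriv hu' hv' i).1)
  have EXPH := divg_expand (W := fun i y => 2 * Wfun u u i y) ((2 : ℤ) - n)
    (hv'.differentiableAt (by simp)) hvx hWHe
    (fun i => ((W_deriv hu' hu' i).1.const_mul 2))
  -- closed forms of the four sums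
  have HSA : ∑ i, fderiv ℝ u x (ee i) * Wfun u v i x
      = (∑ i, ∑ k, fderiv ℝ (fderiv ℝ u) x (ee i) (ee k) * fderiv ℝ u x (ee i)
            * fderiv ℝ v x (ee k))
        - ((∑ i, fderiv ℝ u x (ee i) * fderiv ℝ v x (ee i)) * lapl u x
           + v x * ∑ i, fderiv ℝ u x (ee i) * fderiv ℝ (lapl u) x (ee i)) / n := by
    rw [Finset.sum_congr rfl fun i (_ : i ∈ Finset.univ) => show
        fderiv ℝ u x (ee i) * Wfun u v i x
        = (∑ k, fderiv ℝ (fderiv ℝ u) x (ee i) (ee k) * fderiv ℝ u x (ee i)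
              * fderiv ℝ v x (ee k))
          - (fderiv ℝ u x (ee i) * fderiv ℝ v x (ee i) * lapl u x
             + v x * (fderiv ℝ u x (ee i) * fderiv ℝ (lapl u) x (ee i))) / n by
      simp only [Wfun]
      rw [mul_sub, Finset.mul_sum]
      congr 1
      · exact Finset.sum_congr rfl fun k _ => by ring
      · ring]
    rw [Finset.sum_sub_distrib, ← Finset.sum_div, Finset.sum_add_distrib,
      ← Finset.sum_mul, ← Finset.mul_sum]
  have HSB : ∑ i, fderiv ℝ v x (ee i) * Wfun u u i x
      = (∑ i, ∑ k, fderiv ℝ (fderiv ℝ u) x (ee i) (ee k) * fderiv ℝ u x (ee i)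
            * fderiv ℝ v x (ee k))
        - ((∑ i, fderiv ℝ u x (ee i) * fderiv ℝ v x (ee i)) * lapl u x
           + u x * ∑ i, fderiv ℝ v x (ee i) * fderiv ℝ (lapl u) x (ee i)) / n := by
    rw [Finset.sum_congr rfl fun i (_ : i ∈ Finset.univ) => show
        fderiv ℝ v x (ee i) * Wfun u u i x
        = (∑ k, fderiv ℝ (fderiv ℝ u) x (ee i) (ee k) * fderiv ℝ v x (ee i)
              * fderiv ℝ u x (ee k))
          - (fderiv ℝ u x (ee i) * fderiv ℝ v x (ee i) * lapl u x
             + u x * (fderiv ℝ v x (ee i) * fderiv ℝ (lapl u) x (ee i))) / n by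
      simp only [Wfun]
      rw [mul_sub, Finset.mul_sum]
      congr 1
      · exact Finset.sum_congr rfl fun k _ => by ring
      · ring]
    rw [Finset.sum_sub_distrib, ← Finset.sum_div, Finset.sum_add_distrib,
      ← Finset.sum_mul, ← Finset.mul_sum]
    congr 1
    rw [Finset.sum_comm]
    exact Finset.sum_congr rfl fun k _ => Finset.sum_congr rfl fun i _ => by
      rw [schwarz hu' (ee i) (ee k)]; ring
  have HSC : ∑ i, fderiv ℝ (Wfun u v i) x (ee i)
      = (∑ i, fderiv ℝ v x (ee i) * fderiv ℝ (lapl u) x (ee i))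
        + lapl v x / n * lapl u x
        - (lapl v x * lapl u x
           + 2 * (∑ i, fderiv ℝ v x (ee i) * fderiv ℝ (lapl u) x (ee i))
           + v x * ∑ i, fderiv ℝ (fderiv ℝ (lapl u)) x (ee i) (ee i)) / n := by
    have gi : ∀ i : Fin n, fderiv ℝ (Wfun u v i) x (ee i)
        = (∑ k, fderiv ℝ (fderiv ℝ (fderiv ℝ u)) x (ee i) (ee i) (ee k) * fderiv ℝ v x (ee k))
          + lapl v x / n * fderiv ℝ (fderiv ℝ u) x (ee i) (ee i)
          - (fderiv ℝ (fderiv ℝ v) x (ee i) (ee i) * lapl u x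
             + 2 * (fderiv ℝ v x (ee i) * fderiv ℝ (lapl u) x (ee i))
             + v x * fderiv ℝ (fderiv ℝ (lapl u)) x (ee i) (ee i)) / n := by
      intro i
      rw [(W_deriv hu' hv' i).2]
      rw [Finset.sum_add_distrib]
      rw [show (∑ k, fderiv ℝ (fderiv ℝ u) x (ee i) (ee k)
              * fderiv ℝ (fderiv ℝ v) x (ee i) (ee k))
          = ∑ k, (if i = k then lapl v x / n * fderiv ℝ (fderiv ℝ u) x (ee i) (ee k) else 0) from
        Finset.sum_congr rfl fun k _ => by rw [hvA x hx i k]; split_ifs <;> ring]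
      simp only [Finset.sum_ite_eq, Finset.mem_univ, if_true]
      ring
    rw [Finset.sum_congr rfl fun i (_ : i ∈ Finset.univ) => gi i]
    rw [Finset.sum_sub_distrib, Finset.sum_add_distrib, ← Finset.mul_sum, ← Finset.sum_div,
      Finset.sum_add_distrib, Finset.sum_add_distrib, ← Finset.sum_mul, ← Finset.mul_sum,
      ← Finset.mul_sum, ← lapl_eq, ← lapl_eq]
    congr 2
    rw [Finset.sum_comm]
    exact Finset.sum_congr rfl fun k _ => by
      rw [← Finset.sum_mul, ← sum_T hΩ hsmu hx k]; ring
  have HSD : ∑ i, fderiv ℝ (Wfun u u i) x (ee i)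
      = (∑ i, fderiv ℝ u x (ee i) * fderiv ℝ (lapl u) x (ee i))
        + (∑ i, ∑ k, (fderiv ℝ (fderiv ℝ u) x (ee i) (ee k)) ^ 2)
        - (lapl u x * lapl u x
           + 2 * (∑ i, fderiv ℝ u x (ee i) * fderiv ℝ (lapl u) x (ee i))
           + u x * ∑ i, fderiv ℝ (fderiv ℝ (lapl u)) x (ee i) (ee i)) / n := by
    have gi : ∀ i : Fin n, fderiv ℝ (Wfun u u i) x (ee i)
        = ((∑ k, fderiv ℝ (fderiv ℝ (fderiv ℝ u)) x (ee i) (ee i) (ee k) * fderiv ℝ u x (ee k))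
          + ∑ k, (fderiv ℝ (fderiv ℝ u) x (ee i) (ee k)) ^ 2)
          - (fderiv ℝ (fderiv ℝ u) x (ee i) (ee i) * lapl u x
             + 2 * (fderiv ℝ u x (ee i) * fderiv ℝ (lapl u) x (ee i))
             + u x * fderiv ℝ (fderiv ℝ (lapl u)) x (ee i) (ee i)) / n := by
      intro i
      rw [(W_deriv hu' hu' i).2]
      rw [Finset.sum_add_distrib]
      rw [Finset.sum_congr rfl fun k (_ : k ∈ Finset.univ) => show
          fderiv ℝ (fderiv ℝ u) x (ee i) (ee k) * fderiv ℝ (fderiv ℝ u) x (ee i) (ee k)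
          = (fderiv ℝ (fderiv ℝ u) x (ee i) (ee k)) ^ 2 from by ring]
      ring
    rw [Finset.sum_congr rfl fun i (_ : i ∈ Finset.univ) => gi i]
    rw [Finset.sum_sub_distrib, Finset.sum_add_distrib, ← Finset.sum_div,
      Finset.sum_add_distrib, Finset.sum_add_distrib, ← Finset.sum_mul, ← Finset.mul_sum,
      ← Finset.mul_sum, ← lapl_eq]
    congr 2
    rw [Finset.sum_comm]
    exact Finset.sum_congr rfl fun k _ => by
      rw [← Finset.sum_mul, ← sum_T hΩ hsmu hx k]; ring
  have HRHS : ∑ i, ∑ j, (hess u x i j - lapl u x / (n : ℝ) * (if i = j then 1 else 0)) ^ 2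
      = (∑ i, ∑ k, (fderiv ℝ (fderiv ℝ u) x (ee i) (ee k)) ^ 2) - lapl u x ^ 2 / n := by
    rw [Finset.sum_congr rfl fun i (_ : i ∈ Finset.univ) =>
      Finset.sum_congr rfl fun j (_ : j ∈ Finset.univ) => show
        (hess u x i j - lapl u x / (n : ℝ) * (if i = j then 1 else 0)) ^ 2
        = (fderiv ℝ (fderiv ℝ u) x (ee i) (ee j)) ^ 2
          - (if i = j then 2 * (lapl u x / n) * fderiv ℝ (fderiv ℝ u) x (ee i) (ee j) else 0)
          + (if i = j then (lapl u x / n) ^ 2 else 0) from by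
      rw [hess_eq]; split_ifs <;> ring]
    simp only [Finset.sum_add_distrib, Finset.sum_sub_distrib, Finset.sum_ite_eq,
      Finset.mem_univ, if_true, Finset.sum_const, Finset.card_univ, Fintype.card_fin,
      nsmul_eq_mul]
    rw [show (∑ i, 2 * (lapl u x / ↑n) * fderiv ℝ (fderiv ℝ u) x (ee i) (ee i))
        = 2 * (lapl u x / ↑n) * ∑ i, fderiv ℝ (fderiv ℝ u) x (ee i) (ee i) from
      (Finset.mul_sum _ _ _).symm, ← lapl_eq]
    field_simp
    ring
  -- assemble
  have DG : divg (fun y => u y ^ ((2 : ℤ) - (n : ℤ)) • gradient G y) x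
      = (((2 : ℤ) - (n : ℤ) : ℤ) : ℝ) * u x ^ ((2 : ℤ) - (n : ℤ) - 1)
          * (∑ i, fderiv ℝ u x (ee i) * Wfun u v i x)
        + u x ^ ((2 : ℤ) - (n : ℤ)) * ∑ i, fderiv ℝ (Wfun u v i) x (ee i) := by
    rw [EXPG]
    rw [Finset.sum_congr rfl fun i (_ : i ∈ Finset.univ) => show
        (((2 : ℤ) - (n : ℤ) : ℤ) : ℝ) * u x ^ ((2 : ℤ) - (n : ℤ) - 1) * fderiv ℝ u x (ee i)
            * Wfun u v i x
          + u x ^ ((2 : ℤ) - (n : ℤ)) * fderiv ℝ (Wfun u v i) x (ee i)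
        = (((2 : ℤ) - (n : ℤ) : ℤ) : ℝ) * u x ^ ((2 : ℤ) - (n : ℤ) - 1)
            * (fderiv ℝ u x (ee i) * Wfun u v i x)
          + u x ^ ((2 : ℤ) - (n : ℤ)) * fderiv ℝ (Wfun u v i) x (ee i) from by ring]
    rw [Finset.sum_add_distrib, ← Finset.mul_sum, ← Finset.mul_sum]
  have DH : divg (fun y => v y ^ ((2 : ℤ) - (n : ℤ)) • gradient H y) x
      = (((2 : ℤ) - (n : ℤ) : ℤ) : ℝ) * v x ^ ((2 : ℤ) - (n : ℤ) - 1) * 2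
          * (∑ i, fderiv ℝ v x (ee i) * Wfun u u i x)
        + v x ^ ((2 : ℤ) - (n : ℤ)) * 2 * ∑ i, fderiv ℝ (Wfun u u i) x (ee i) := by
    rw [EXPH]
    rw [Finset.sum_congr rfl fun i (_ : i ∈ Finset.univ) => show
        (((2 : ℤ) - (n : ℤ) : ℤ) : ℝ) * v x ^ ((2 : ℤ) - (n : ℤ) - 1) * fderiv ℝ v x (ee i)
            * (2 * Wfun u u i x)
          + v x ^ ((2 : ℤ) - (n : ℤ)) * fderiv ℝ (fun y => 2 * Wfun u u i y) x (ee i)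
        = (((2 : ℤ) - (n : ℤ) : ℤ) : ℝ) * v x ^ ((2 : ℤ) - (n : ℤ) - 1) * 2
            * (fderiv ℝ v x (ee i) * Wfun u u i x)
          + v x ^ ((2 : ℤ) - (n : ℤ)) * 2 * fderiv ℝ (Wfun u u i) x (ee i) from by
      rw [fderiv_const_mul (W_deriv hu' hu' i).1 (2 : ℝ)]
      simp only [ContinuousLinearMap.smul_apply, smul_eq_mul]
      ring]
    rw [Finset.sum_add_distrib, ← Finset.mul_sum, ← Finset.mul_sum]
  rw [DG, DH, HRHS, HSA, HSB, HSC, HSD]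
  have := final_algebra n hn (u x) (v x) (lapl u x) (lapl v x)
    (∑ i, ∑ k, fderiv ℝ (fderiv ℝ u) x (ee i) (ee k) * fderiv ℝ u x (ee i)
        * fderiv ℝ v x (ee k))
    (∑ i, ∑ k, (fderiv ℝ (fderiv ℝ u) x (ee i) (ee k)) ^ 2)
    (∑ i, fderiv ℝ u x (ee i) * fderiv ℝ v x (ee i))
    (∑ i, fderiv ℝ u x (ee i) * fderiv ℝ (lapl u) x (ee i))
    (∑ i, fderiv ℝ v x (ee i) * fderiv ℝ (lapl u) x (ee i))
    (∑ i, fderiv ℝ (fderiv ℝ (lapl u)) x (ee i) (ee i)) hux hvx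
  exact this
end
end

section
/- Let n ≥ 1 be an integer, let a₀, a₁, …, aₙ, a_{n+1} be real numbers with a₀ > 0 and a₀² − a_{n+1}² > Σ_{i=1}^n aᵢ², and write a = (a₁, …, aₙ) ∈ ℝⁿ. Define u(x) = a₀·(1+|x|²)/2 + ⟨a, x⟩ + a_{n+1}·(1−|x|²)/2 for x ∈ ℝⁿ. Then: (1) u(x) > 0 for all x ∈ ℝⁿ; (2) Δu is identically equal to the positive constant n(a₀ − a_{n+1}); and (3) |∇u|² − (2/n)uΔu is identically equal to the negative constant |a|² + a_{n+1}² − a₀². -/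
/-!
Write `u = c/2 |x|² + ⟨a, x⟩ + d` with `c = a₀ - a_{n+1}` and `d = (a₀ + a_{n+1})/2`. Then
`∇u = c x + a` and the Hessian of `u` is `c` times the identity, so `Δu = n c`, and
`|∇u|² - 2 c u = |a|² - 2 c d = |a|² + a_{n+1}² - a₀²` is constant. The hypothesis says that this
discriminant is negative, which together with `c > 0` makes `u` positive.
-/

open MeasureTheory
open scoped RealInnerProductSpace

noncomputable section

section Quadratic

variable {E : Type*} [NormedAddCommGroup E] [InnerProductSpace ℝ E] (c : ℝ) (a : E) (d : ℝ)

def quadratic (y : E) : ℝ := c / 2 * ‖y‖ ^ 2 + ⟪a, y⟫ + d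

theorem hasFDerivAt_quadratic (x : E) :
    HasFDerivAt (quadratic c a d) (innerSL ℝ (c • x + a)) x := by
  have h := (((hasStrictFDerivAt_norm_sq x).hasFDerivAt.const_mul (c / 2)).add
    (innerSL ℝ a).hasFDerivAt).add_const d
  refine (h.congr_fderiv ?_ :)
  ext v
  simp only [add_apply, smul_apply, innerSL_apply_apply, inner_add_left, real_inner_smul_left,
    smul_eq_mul, nsmul_eq_mul]
  ring

theorem gradient_quadratic [CompleteSpace E] (x : E) :
    gradient (quadratic c a d) x = c • x + a :=
  (hasGradientAt_iff_hasFDerivAt.mpr (hasFDerivAt_quadratic c a d x)).gradient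

theorem iteratedFDeriv_two_quadratic (x v w : E) :
    iteratedFDeriv ℝ 2 (quadratic c a d) x ![v, w] = c * ⟪v, w⟫ := by
  have hfderiv : fderiv ℝ (quadratic c a d) = fun y ↦ (c • innerSL ℝ) y + innerSL ℝ a := by
    ext y v
    simp [(hasFDerivAt_quadratic c a d y).fderiv]
  have hsecond : HasFDerivAt (fderiv ℝ (quadratic c a d)) (c • innerSL ℝ) x :=
    hfderiv ▸ (c • innerSL ℝ).hasFDerivAt.add_const (innerSL ℝ a)
  rw [iteratedFDeriv_two_apply, hsecond.fderiv]
  rfl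

theorem quadratic_pos (hc : 0 < c) (ha : ‖a‖ ^ 2 < 2 * c * d) (x : E) :
    0 < quadratic c a d x := by
  have hcs : -(‖a‖ * ‖x‖) ≤ ⟪a, x⟫ := neg_le_of_abs_le (abs_real_inner_le_norm a x)
  -- completing the square: `2c (c t²/2 - ‖a‖ t + d) = (c t - ‖a‖)² + 2cd - ‖a‖²`
  have hsq : 0 < c / 2 * ‖x‖ ^ 2 - ‖a‖ * ‖x‖ + d := by
    nlinarith [sq_nonneg (c * ‖x‖ - ‖a‖)]
  unfold quadratic
  linarith

theorem norm_sq_smul_add_sub_quadratic (x : E) :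
    ‖c • x + a‖ ^ 2 - 2 * c * quadratic c a d x = ‖a‖ ^ 2 - 2 * c * d := by
  rw [norm_add_sq_real, norm_smul, real_inner_smul_left, mul_pow, Real.norm_eq_abs, sq_abs,
    quadratic, real_inner_comm]
  ring

end Quadratic

theorem lapl_quadratic {n : ℕ} (c : ℝ) (a : EuclideanSpace ℝ (Fin n)) (d : ℝ)
    (x : EuclideanSpace ℝ (Fin n)) :
    lapl (quadratic c a d) x = n * c := by
  simp [lapl, iteratedFDeriv_two_quadratic, mul_comm]

/-- for the quadratic `u(x) = a₀(1+|x|²)/2 + ⟨a,x⟩ + a_{n+1}(1-|x|²)/2`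
with `a₀ > 0` and `a₀² - a_{n+1}² > Σ aᵢ²`, `u` is positive, `Δu` is the positive
constant `n(a₀ - a_{n+1})`, and `|∇u|² - (2/n)uΔu` is the negative constant
`|a|² + a_{n+1}² - a₀²`. -/
theorem quadratic_tractor_norms (n : ℕ) (hn : 1 ≤ n)
    (a₀ aN : ℝ) (a : EuclideanSpace ℝ (Fin n))
    (ha₀ : 0 < a₀) (hlen : a₀ ^ 2 - aN ^ 2 > ∑ i, a i ^ 2)
    (u : EuclideanSpace ℝ (Fin n) → ℝ)
    (hu : ∀ x, u x = a₀ * (1 + ‖x‖ ^ 2) / 2 + ⟪a, x⟫ + aN * (1 - ‖x‖ ^ 2) / 2) :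
    (∀ x, 0 < u x) ∧
      (0 < (n : ℝ) * (a₀ - aN) ∧ ∀ x, lapl u x = n * (a₀ - aN)) ∧
      ((∑ i, a i ^ 2) + aN ^ 2 - a₀ ^ 2 < 0 ∧
        ∀ x, ‖gradient u x‖ ^ 2 - (2 / n) * u x * lapl u x
          = (∑ i, a i ^ 2) + aN ^ 2 - a₀ ^ 2) := by
  have hu : u = quadratic (a₀ - aN) a ((a₀ + aN) / 2) := funext fun x ↦ by
    rw [hu, quadratic]
    ring
  subst hu
  rw [← EuclideanSpace.real_norm_sq_eq] at hlen ⊢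
  have hdisc : ‖a‖ ^ 2 < 2 * (a₀ - aN) * ((a₀ + aN) / 2) := by linarith
  have hc : 0 < a₀ - aN := by nlinarith [norm_nonneg a]
  have hn : (0 : ℝ) < n := by exact_mod_cast hn
  refine ⟨quadratic_pos _ _ _ hc hdisc, ⟨by positivity, lapl_quadratic _ _ _⟩, by linarith,
    fun x ↦ ?_⟩
  rw [gradient_quadratic, lapl_quadratic]
  have htractor := norm_sq_smul_add_sub_quadratic (a₀ - aN) a ((a₀ + aN) / 2) x
  field_simp
  linear_combination htractor
end
end

section
/- Let n ≥ 1 be an integer and m > 0 with m+n−2 > 0. Let a₀, a₁, …, aₙ, a_{n+1} be real numbers with a₀ > 0 and a₀² − a_{n+1}² > Σ_{i=1}^n aᵢ², write a = (a₁, …, aₙ) ∈ ℝⁿ, and set u(x) = a₀·(1+|x|²)/2 + ⟨a, x⟩ + a_{n+1}·(1−|x|²)/2, a positive function on ℝⁿ. Then the function w = u^{−(m+n−2)/2} satisfies, at every point of ℝⁿ, −Δw = [(m+n)(m+n−2)(a₀² − a_{n+1}² − |a|²)/4]·w^{(m+n+2)/(m+n−2)} − [m(m+n−2)(a₀ − a_{n+1})/2]·w^{(m+n)/(m+n−2)},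 and both bracketed coefficients are positive. -/
/-!
With `c = (a₀ + a_{n+1})/2` and `b = (a₀ - a_{n+1})/2` the function is
`u(x) = c + ⟨a, x⟩ + b|x|²`, so `∇u = a + 2bx`, `Δu = 2nb` and `|∇u|² = |a|² + 4b(u - c)`;
`u > 0` because `4bu = |2bx + a|² + (4bc - |a|²)` and `4bc = a₀² - a_{n+1}²`.
The chain rule `Δ(u^p) = p u^{p-1} Δu + p(p-1) u^{p-2} |∇u|²` with `p = -(m+n-2)/2` then
writes `-Δw` in terms of `u^{p-2} = w^{(m+n+2)/(m+n-2)}` and `u^{p-1} = w^{(m+n)/(m+n-2)}`.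
-/

open scoped RealInnerProductSpace

noncomputable section

theorem iteratedFDeriv_two_apply_of_differentiableAt {𝕜 E F : Type*} [NontriviallyNormedField 𝕜]
    [NormedAddCommGroup E] [NormedSpace 𝕜 E] [NormedAddCommGroup F] [NormedSpace 𝕜 F]
    {f : E → F} {x : E} (hf : DifferentiableAt 𝕜 (fderiv 𝕜 f) x) (v w : E) :
    iteratedFDeriv 𝕜 2 f x ![v, w] = fderiv 𝕜 (fun y => fderiv 𝕜 f y w) x v := by
  rw [iteratedFDeriv_two_apply, fderiv_clm_apply hf (differentiableAt_const w)]
  simp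

section Rpow

variable {E : Type*} [NormedAddCommGroup E] [NormedSpace ℝ E] {u : E → ℝ}

theorem iteratedFDeriv_two_rpow_const_apply (hu : ContDiff ℝ 2 u) (hu0 : ∀ y, u y ≠ 0)
    (p : ℝ) (x v w : E) :
    iteratedFDeriv ℝ 2 (fun y => u y ^ p) x ![v, w]
      = p * u x ^ (p - 1) * iteratedFDeriv ℝ 2 u x ![v, w]
        + p * (p - 1) * u x ^ (p - 2) * (fderiv ℝ u x v * fderiv ℝ u x w) := by
  have hu' : ∀ y, HasFDerivAt u (fderiv ℝ u y) y :=
    fun y => (hu.differentiable two_ne_zero y).hasFDerivAt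
  have hDu : ContDiff ℝ 1 (fderiv ℝ u) := hu.fderiv_right (by norm_num)
  have hfderiv : fderiv ℝ (fun y => u y ^ p) = fun y => (p * u y ^ (p - 1)) • fderiv ℝ u y :=
    funext fun y => ((hu' y).rpow_const (Or.inl (hu0 y))).fderiv
  have hcoef : HasFDerivAt (fun y => p * u y ^ (p - 1))
      (p • ((p - 1) * u x ^ (p - 1 - 1)) • fderiv ℝ u x) x :=
    ((hu' x).rpow_const (Or.inl (hu0 x))).const_mul p
  have hDuw : HasFDerivAt (fun y => fderiv ℝ u y w) (fderiv ℝ (fun y => fderiv ℝ u y w) x) x :=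
    ((hDu.differentiable one_ne_zero x).clm_apply (differentiableAt_const w)).hasFDerivAt
  rw [iteratedFDeriv_two_apply_of_differentiableAt
      (((hu.rpow_const_of_ne hu0).fderiv_right le_rfl).differentiable one_ne_zero x),
    iteratedFDeriv_two_apply_of_differentiableAt (hDu.differentiable one_ne_zero x), hfderiv]
  simp only [smul_apply, smul_eq_mul]
  rw [(hcoef.fun_mul hDuw).fderiv]
  simp only [add_apply, smul_apply, smul_eq_mul, show p - 1 - 1 = p - 2 by ring]
  ring

end Rpow

section IsotropicQuadratic

variable {E : Type*} [NormedAddCommGroup E] [InnerProductSpace ℝ E]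

def isotropicQuadratic (c : ℝ) (a : E) (b : ℝ) (y : E) : ℝ := c + ⟪a, y⟫ + b * ‖y‖ ^ 2

variable (c : ℝ) (a : E) (b : ℝ)

theorem hasFDerivAt_isotropicQuadratic (x : E) :
    HasFDerivAt (isotropicQuadratic c a b) (innerSL ℝ (a + (2 * b) • x)) x := by
  refine (((innerSL ℝ a).hasFDerivAt.const_add c).add
    ((hasStrictFDerivAt_norm_sq x).hasFDerivAt.const_mul b)).congr_fderiv ?_
  ext v
  simp only [add_apply, coe_innerSL_apply, smul_apply, nsmul_eq_mul, smul_eq_mul, map_add, map_smul]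
  ring

theorem contDiff_isotropicQuadratic {k : WithTop ℕ∞} : ContDiff ℝ k (isotropicQuadratic c a b) :=
  (contDiff_const.add ((innerSL ℝ a).contDiff)).add (contDiff_const.mul (contDiff_norm_sq ℝ))

theorem iteratedFDeriv_two_isotropicQuadratic (x v w : E) :
    iteratedFDeriv ℝ 2 (isotropicQuadratic c a b) x ![v, w] = 2 * b * ⟪v, w⟫ := by
  have hfderiv : fderiv ℝ (isotropicQuadratic c a b) = fun y => innerSL ℝ (a + (2 * b) • y) :=
    funext fun y => (hasFDerivAt_isotropicQuadratic c a b y).fderiv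
  have hline : HasFDerivAt (fun y => innerSL ℝ (a + (2 * b) • y) w) ((2 * b) • innerSL ℝ w) x := by
    refine ((((innerSL ℝ w).hasFDerivAt (x := x)).const_mul (2 * b)).const_add
      ⟪a, w⟫).congr_of_eventuallyEq (Filter.Eventually.of_forall fun y => ?_)
    simp only [map_add, map_smul, add_apply, coe_innerSL_apply, smul_apply, real_inner_comm,
      smul_eq_mul]
  rw [iteratedFDeriv_two_apply_of_differentiableAt
    (((contDiff_isotropicQuadratic c a b).fderiv_right le_rfl).differentiable one_ne_zero x),
    hfderiv, hline.fderiv]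
  simp [real_inner_comm]

theorem isotropicQuadratic_pos (hb : 0 < b) (hab : ‖a‖ ^ 2 < 4 * b * c) (y : E) :
    0 < isotropicQuadratic c a b y := by
  have hsq : ‖(2 * b) • y + a‖ ^ 2 = 4 * b * (b * ‖y‖ ^ 2 + ⟪a, y⟫) + ‖a‖ ^ 2 := by
    rw [norm_add_sq_real, norm_smul, real_inner_smul_left, real_inner_comm, Real.norm_eq_abs,
      abs_of_pos (by positivity)]
    ring
  have : 0 < 4 * b * isotropicQuadratic c a b y := by
    unfold isotropicQuadratic
    nlinarith [sq_nonneg ‖(2 * b) • y + a‖]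
  exact pos_of_mul_pos_right this (by positivity)

theorem norm_gradient_isotropicQuadratic_sq (x : E) :
    ‖a + (2 * b) • x‖ ^ 2 = ‖a‖ ^ 2 + 4 * b * (isotropicQuadratic c a b x - c) := by
  rw [norm_add_sq_real, norm_smul, real_inner_smul_right, Real.norm_eq_abs, mul_pow, sq_abs,
    isotropicQuadratic]
  ring

end IsotropicQuadratic

section Laplacian

variable {n : ℕ}

theorem sum_innerSL_single_sq (z : EuclideanSpace ℝ (Fin n)) :
    ∑ i, innerSL ℝ z (EuclideanSpace.single i 1) ^ 2 = ‖z‖ ^ 2 := by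
  simp [EuclideanSpace.inner_single_right, EuclideanSpace.real_norm_sq_eq]

theorem lapl_rpow_const {u : EuclideanSpace ℝ (Fin n) → ℝ} (hu : ContDiff ℝ 2 u)
    (hu0 : ∀ y, u y ≠ 0) (p : ℝ) (x : EuclideanSpace ℝ (Fin n)) :
    lapl (fun y => u y ^ p) x = p * u x ^ (p - 1) * lapl u x
      + p * (p - 1) * u x ^ (p - 2) * ∑ i, fderiv ℝ u x (EuclideanSpace.single i 1) ^ 2 := by
  simp only [lapl, iteratedFDeriv_two_rpow_const_apply hu hu0, Finset.sum_add_distrib,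
    Finset.mul_sum, sq]

variable (c : ℝ) (a : EuclideanSpace ℝ (Fin n)) (b : ℝ)

theorem lapl_isotropicQuadratic (x : EuclideanSpace ℝ (Fin n)) :
    lapl (isotropicQuadratic c a b) x = n * (2 * b) := by
  simp [lapl, iteratedFDeriv_two_isotropicQuadratic]

theorem lapl_rpow_isotropicQuadratic (hb : 0 < b) (hab : ‖a‖ ^ 2 < 4 * b * c) (p : ℝ)
    (x : EuclideanSpace ℝ (Fin n)) :
    lapl (fun y => isotropicQuadratic c a b y ^ p) x
      = p * isotropicQuadratic c a b x ^ (p - 2) * (2 * b * n * isotropicQuadratic c a b x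
        + (p - 1) * (‖a‖ ^ 2 + 4 * b * (isotropicQuadratic c a b x - c))) := by
  have hq := isotropicQuadratic_pos c a b hb hab x
  rw [lapl_rpow_const (contDiff_isotropicQuadratic c a b)
      (fun y => (isotropicQuadratic_pos c a b hb hab y).ne') p x,
    lapl_isotropicQuadratic, (hasFDerivAt_isotropicQuadratic c a b x).fderiv,
    sum_innerSL_single_sq, norm_gradient_isotropicQuadratic_sq,
    show p - 1 = p - 2 + 1 by ring, Real.rpow_add_one hq.ne']
  ring

end Laplacian

theorem quadratic_gives_critical_function_general (n : ℕ) (m : ℝ) (hm : 0 < m)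
    (hmn : 0 < m + n - 2)
    (a₀ aN : ℝ) (a : EuclideanSpace ℝ (Fin n))
    (ha₀ : 0 < a₀) (hlen : a₀ ^ 2 - aN ^ 2 > ∑ i, a i ^ 2)
    (u w : EuclideanSpace ℝ (Fin n) → ℝ)
    (hu : ∀ x, u x = a₀ * (1 + ‖x‖ ^ 2) / 2 + ⟪a, x⟫ + aN * (1 - ‖x‖ ^ 2) / 2)
    (hw : ∀ x, w x = u x ^ (-(m + (n : ℝ) - 2) / 2)) :
    (0 < (m + n) * (m + n - 2) * (a₀ ^ 2 - aN ^ 2 - ∑ i, a i ^ 2) / 4) ∧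
    (0 < m * (m + n - 2) * (a₀ - aN) / 2) ∧
    ∀ x, -lapl w x
      = ((m + n) * (m + n - 2) * (a₀ ^ 2 - aN ^ 2 - ∑ i, a i ^ 2) / 4) *
          w x ^ ((m + (n : ℝ) + 2) / (m + (n : ℝ) - 2))
        - (m * (m + n - 2) * (a₀ - aN) / 2) *
          w x ^ ((m + (n : ℝ)) / (m + (n : ℝ) - 2)) := by
  rw [← EuclideanSpace.real_norm_sq_eq] at hlen ⊢
  have hdisc : 0 < a₀ ^ 2 - aN ^ 2 - ‖a‖ ^ 2 := by linarith
  have hb : 0 < (a₀ - aN) / 2 := by nlinarith [sq_nonneg ‖a‖]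
  have hab : ‖a‖ ^ 2 < 4 * ((a₀ - aN) / 2) * ((a₀ + aN) / 2) := by linarith
  have hmn' : 0 < m + n := by linarith
  refine ⟨by positivity, by linarith [mul_pos (mul_pos hm hmn) hb], fun x => ?_⟩
  have hu' : u = isotropicQuadratic ((a₀ + aN) / 2) a ((a₀ - aN) / 2) :=
    funext fun y => by rw [hu, isotropicQuadratic]; ring
  have hq : 0 < u x := hu' ▸ isotropicQuadratic_pos _ _ _ hb hab x
  set p := -(m + (n : ℝ) - 2) / 2
  have hpow : ∀ r, w x ^ r = u x ^ (p * r) := fun r => by rw [hw, ← Real.rpow_mul hq.le]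
  rw [hpow, hpow, show p * ((m + n + 2) / (m + n - 2)) = p - 2 by field_simp; ring,
    show p * ((m + n) / (m + n - 2)) = p - 2 + 1 by field_simp; ring, Real.rpow_add_one hq.ne',
    show w = fun y => u y ^ p from funext hw, hu', lapl_rpow_isotropicQuadratic _ _ _ hb hab]
  ring

/-- `w = u^{-(m+n-2)/2}` built from a positive-definite quadratic
`u` satisfies the (k = 1) Euler–Lagrange equation of the Euclidean conformal GNS
functional, with positive coefficients. -/
theorem quadratic_gives_critical_function (n : ℕ) (hn : 1 ≤ n) (m : ℝ) (hm : 0 < m)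
    (hmn : 0 < m + n - 2)
    (a₀ aN : ℝ) (a : EuclideanSpace ℝ (Fin n))
    (ha₀ : 0 < a₀) (hlen : a₀ ^ 2 - aN ^ 2 > ∑ i, a i ^ 2)
    (u w : EuclideanSpace ℝ (Fin n) → ℝ)
    (hu : ∀ x, u x = a₀ * (1 + ‖x‖ ^ 2) / 2 + ⟪a, x⟫ + aN * (1 - ‖x‖ ^ 2) / 2)
    (hw : ∀ x, w x = u x ^ (-(m + (n : ℝ) - 2) / 2)) :
    (0 < (m + n) * (m + n - 2) * (a₀ ^ 2 - aN ^ 2 - ∑ i, a i ^ 2) / 4) ∧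
    (0 < m * (m + n - 2) * (a₀ - aN) / 2) ∧
    ∀ x, -lapl w x
      = ((m + n) * (m + n - 2) * (a₀ ^ 2 - aN ^ 2 - ∑ i, a i ^ 2) / 4) *
          w x ^ ((m + (n : ℝ) + 2) / (m + (n : ℝ) - 2))
        - (m * (m + n - 2) * (a₀ - aN) / 2) *
          w x ^ ((m + (n : ℝ)) / (m + (n : ℝ) - 2)) :=
  quadratic_gives_critical_function_general n m hm hmn a₀ aN a ha₀ hlen u w hu hw
end
end
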